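/- arXiv:2308.01642 — 6 statements merged into one kernel-verified Lean document; each statement's English description precedes it below -/
import Mathlib

section
/- Let (ζ_k)_{k∈ℕ} be strictly positive reals with Σ_k ζ_k < ∞, let (a_k)_{k∈ℕ} be a square-summable real sequence, let α > 0, and let μ = ⊗_{k∈ℕ} N(0,ζ_k) be the product probability measure on ℝ^ℕ. Then for μ-almost every x ∈ ℝ^ℕ the series Σ_k (x_k − a_k)² converges, the function x ↦ exp(−(α/2) Σ_k (x_k − a_k)²) is μ-integrable, and ∫_{ℝ^ℕ} exp(−(α/2) Σ_k (x_k − a_k)²) dμ(x) = ∏_{k∈ℕ} (1+αζ_k)^{−1/2} exp(−α a_k² / (2(1+αζ_k))), the infinite product being convergent. -/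
open MeasureTheory ProbabilityTheory
open scoped NNReal ENNReal

section GaussAux

open Real Set Filter
open scoped Topology

lemma integral_gaussianReal_eq (ζ : ℝ≥0) (hζ : ζ ≠ 0) (g : ℝ → ℝ) :
    ∫ y, g y ∂(gaussianReal 0 ζ) = ∫ y, gaussianPDFReal 0 ζ y * g y := by
  rw [gaussianReal_of_var_ne_zero _ hζ]
  have : (gaussianPDF 0 ζ) = fun x => ((gaussianPDFReal 0 ζ x).toNNReal : ℝ≥0∞) := rfl
  rw [this, integral_withDensity_eq_integral_smul
    ((measurable_gaussianPDFReal 0 ζ).real_toNNReal)]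
  congr 1
  ext y
  rw [NNReal.smul_def, smul_eq_mul, Real.coe_toNNReal _ (gaussianPDFReal_nonneg 0 ζ y)]

lemma integrable_gaussianReal_iff (ζ : ℝ≥0) (hζ : ζ ≠ 0) (g : ℝ → ℝ) :
    Integrable g (gaussianReal 0 ζ) ↔ Integrable (fun y => gaussianPDFReal 0 ζ y * g y) := by
  rw [gaussianReal_of_var_ne_zero _ hζ]
  have : (gaussianPDF 0 ζ) = fun x => ((gaussianPDFReal 0 ζ x).toNNReal : ℝ≥0∞) := rfl
  rw [this, integrable_withDensity_iff_integrable_smul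
    ((measurable_gaussianPDFReal 0 ζ).real_toNNReal)]
  apply integrable_congr
  filter_upwards with y
  rw [NNReal.smul_def, smul_eq_mul, Real.coe_toNNReal _ (gaussianPDFReal_nonneg 0 ζ y)]

lemma integral_sq_mul_exp (b : ℝ) (hb : 0 < b) :
    ∫ x : ℝ, x ^ 2 * rexp (-b * x ^ 2) = b ^ (-(3:ℝ)/2) * (√π / 2) := by
  have h1 : ∫ x : ℝ, x ^ 2 * rexp (-b * x ^ 2)
      = 2 * ∫ x in Ioi (0:ℝ), x ^ 2 * rexp (-b * x ^ 2) := by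
    rw [← integral_comp_abs (f := fun x => x ^ 2 * rexp (-b * x ^ 2))]
    congr 1; ext x; rw [sq_abs]
  have h2 : ∫ x in Ioi (0:ℝ), x ^ 2 * rexp (-b * x ^ 2)
      = ∫ x in Ioi (0:ℝ), x ^ (2:ℝ) * rexp (-b * x ^ (2:ℝ)) := by
    refine setIntegral_congr_fun measurableSet_Ioi fun x hx => ?_
    rw [← Real.rpow_natCast x 2]
    norm_num
  have h3 : Real.Gamma (((2:ℝ) + 1) / 2) = √π / 2 := by
    rw [show ((2:ℝ)+1)/2 = 1/2 + 1 by norm_num, Real.Gamma_add_one (by norm_num),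
      Real.Gamma_one_half_eq]
    ring
  rw [h1, h2, integral_rpow_mul_exp_neg_mul_rpow (by norm_num) (by norm_num) hb, h3]
  ring

lemma integrable_sq_mul_exp (b : ℝ) (hb : 0 < b) :
    Integrable (fun x : ℝ => x ^ 2 * rexp (-b * x ^ 2)) := by
  have := integrable_rpow_mul_exp_neg_mul_sq hb (by norm_num : (-1:ℝ) < 2)
  apply this.congr
  filter_upwards with x
  rw [← Real.rpow_natCast x 2]
  norm_num

lemma pdf_eq (ζ : ℝ≥0) (y : ℝ) :
    gaussianPDFReal 0 ζ y
      = (√(2 * π * (ζ:ℝ)))⁻¹ * rexp (-(2*(ζ:ℝ))⁻¹ * y ^ 2) := by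
  rw [gaussianPDFReal]
  congr 1
  rw [sub_zero]
  congr 1
  field_simp

lemma integrable_sq_gauss (ζ : ℝ≥0) (hζ : 0 < ζ) :
    Integrable (fun y => y ^ 2) (gaussianReal 0 ζ) := by
  rw [integrable_gaussianReal_iff ζ hζ.ne']
  have h : (fun y => gaussianPDFReal 0 ζ y * y ^ 2)
      = fun y => (√(2 * π * (ζ:ℝ)))⁻¹ * (y ^ 2 * rexp (-(2*(ζ:ℝ))⁻¹ * y ^ 2)) := by
    funext y; rw [pdf_eq]; ring
  rw [h]
  exact (integrable_sq_mul_exp _ (by positivity)).const_mul _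

lemma integrable_id_gauss (ζ : ℝ≥0) (hζ : 0 < ζ) :
    Integrable (fun y => y) (gaussianReal 0 ζ) := by
  rw [integrable_gaussianReal_iff ζ hζ.ne']
  have h : (fun y => gaussianPDFReal 0 ζ y * y)
      = fun y => (√(2 * π * (ζ:ℝ)))⁻¹ * (y * rexp (-(2*(ζ:ℝ))⁻¹ * y ^ 2)) := by
    funext y; rw [pdf_eq]; ring
  rw [h]
  exact (integrable_mul_exp_neg_mul_sq (by positivity)).const_mul _

lemma integral_id_gauss (ζ : ℝ≥0) (hζ : 0 < ζ) :
    ∫ y, y ∂(gaussianReal 0 ζ) = 0 := by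
  have hmap : Measure.map (fun y : ℝ => (-1) * y) (gaussianReal 0 ζ) = gaussianReal 0 ζ := by
    rw [gaussianReal_map_const_mul (-1)]
    norm_num
  have h : ∫ y, y ∂(gaussianReal 0 ζ) = ∫ y, -y ∂(gaussianReal 0 ζ) := by
    conv_lhs => rw [← hmap]
    rw [integral_map (f := fun y : ℝ => y) ((measurable_const_mul _).aemeasurable) measurable_id.aestronglyMeasurable]
    congr 1
    funext y
    ring
  rw [integral_neg] at h
  linarith

lemma integral_sq_gauss (ζ : ℝ≥0) (hζ : 0 < ζ) :
    ∫ y, y ^ 2 ∂(gaussianReal 0 ζ) = (ζ:ℝ) := by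
  set t : ℝ := (ζ:ℝ) with htdef
  have ht : 0 < t := hζ
  rw [integral_gaussianReal_eq ζ hζ.ne']
  have h : (fun y => gaussianPDFReal 0 ζ y * y ^ 2)
      = fun y => (√(2 * π * t))⁻¹ * (y ^ 2 * rexp (-(2*t)⁻¹ * y ^ 2)) := by
    funext y; rw [pdf_eq]; ring
  rw [h, integral_const_mul, integral_sq_mul_exp _ (by positivity)]
  have h2 : ((2*t)⁻¹ : ℝ) ^ (-(3:ℝ)/2) = (2*t) * √(2*t) := by
    rw [Real.inv_rpow (by positivity), show (-(3:ℝ)/2) = -(3/2) by ring,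
      Real.rpow_neg (by positivity), inv_inv, show ((3:ℝ)/2) = 1 + 1/2 by norm_num,
      Real.rpow_add (by positivity), Real.rpow_one, ← Real.sqrt_eq_rpow]
  rw [h2, show 2*π*t = (2*t)*π by ring, Real.sqrt_mul (by positivity : (0:ℝ) ≤ 2*t)]
  have h3 : √(2*t) ≠ 0 := by positivity
  have h4 : √π ≠ 0 := by positivity
  field_simp

lemma gauss_exp_int (α : ℝ) (hα : 0 < α) (a : ℝ) (ζ : ℝ≥0) (hζ : 0 < ζ) :
    ∫ y, rexp (-(α/2) * (y - a)^2) ∂(gaussianReal 0 ζ)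
      = (1 + α * (ζ:ℝ)) ^ (-(1:ℝ)/2) * rexp (-α * a^2 / (2*(1+α*(ζ:ℝ)))) := by
  set t : ℝ := (ζ:ℝ) with htdef
  have ht : 0 < t := hζ
  set A : ℝ := 1 + α * t with hAdef
  have hA : 0 < A := by positivity
  set m : ℝ := α * a * t / A with hmdef
  rw [integral_gaussianReal_eq ζ hζ.ne']
  have hpt : ∀ y : ℝ, gaussianPDFReal 0 ζ y * rexp (-(α/2) * (y - a)^2)
      = (√(2 * π * t))⁻¹ * (rexp (-α * a^2 / (2*A)) * rexp (-(A/(2*t)) * (y - m)^2)) := by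
    intro y
    rw [gaussianPDFReal]
    rw [mul_assoc, ← Real.exp_add, ← Real.exp_add]
    congr 2
    rw [hmdef, hAdef]
    field_simp
    ring
  simp_rw [hpt]
  rw [integral_const_mul, integral_const_mul,
    integral_sub_right_eq_self (fun y => rexp (-(A/(2*t)) * y^2)) m,
    integral_gaussian]
  have hsq : (√(2 * π * t))⁻¹ * √(π / (A / (2*t))) = A ^ (-(1:ℝ)/2) := by
    have h1 : π / (A / (2*t)) = (2 * π * t) / A := by field_simp
    rw [h1, Real.sqrt_div (by positivity), inv_mul_eq_div]
    rw [div_right_comm, div_self (by positivity : √(2 * π * t) ≠ 0), one_div,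
      show (-(1:ℝ)/2) = -(1/2) by ring, Real.rpow_neg hA.le, ← Real.sqrt_eq_rpow]
  rw [show (√(2 * π * t))⁻¹ * (rexp (-α * a^2 / (2*A)) * √(π / (A / (2*t))))
      = ((√(2 * π * t))⁻¹ * √(π / (A / (2*t)))) * rexp (-α * a^2 / (2*A)) by ring, hsq]

lemma integrable_shift_sq_gauss (a : ℝ) (ζ : ℝ≥0) (hζ : 0 < ζ) :
    Integrable (fun y => (y - a) ^ 2) (gaussianReal 0 ζ) := by
  have h : (fun y : ℝ => (y - a) ^ 2) = fun y => (y ^ 2 - (2*a) * y) + a ^ 2 := by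
    funext y; ring
  rw [h]
  exact ((integrable_sq_gauss ζ hζ).sub ((integrable_id_gauss ζ hζ).const_mul _)).add
    (integrable_const _)

lemma integral_shift_sq_gauss (a : ℝ) (ζ : ℝ≥0) (hζ : 0 < ζ) :
    ∫ y, (y - a) ^ 2 ∂(gaussianReal 0 ζ) = (ζ:ℝ) + a ^ 2 := by
  have h : (fun y : ℝ => (y - a) ^ 2) = fun y => (y ^ 2 - (2*a) * y) + a ^ 2 := by
    funext y; ring
  have h1 : Integrable (fun y : ℝ => y ^ 2 - 2 * a * y) (gaussianReal 0 ζ) :=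
    (integrable_sq_gauss ζ hζ).sub ((integrable_id_gauss ζ hζ).const_mul _)
  have h2 : Integrable (fun y : ℝ => 2 * a * y) (gaussianReal 0 ζ) :=
    (integrable_id_gauss ζ hζ).const_mul _
  rw [h, integral_add h1 (integrable_const _),
    integral_sub (integrable_sq_gauss ζ hζ) h2,
    MeasureTheory.integral_const_mul, integral_id_gauss ζ hζ, integral_sq_gauss ζ hζ]
  simp

lemma lintegral_shift_sq_gauss (a : ℝ) (ζ : ℝ≥0) (hζ : 0 < ζ) :
    ∫⁻ y, ENNReal.ofReal ((y - a) ^ 2) ∂(gaussianReal 0 ζ)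
      = ENNReal.ofReal ((ζ:ℝ) + a ^ 2) := by
  rw [← ofReal_integral_eq_lintegral_ofReal (integrable_shift_sq_gauss a ζ hζ)
    (ae_of_all _ fun y => sq_nonneg _), integral_shift_sq_gauss a ζ hζ]

section
variable (ζ : ℕ → ℝ≥0) (μ : Measure (ℕ → ℝ)) [IsProbabilityMeasure μ]
  (hprod : ∀ (s : Finset ℕ) (B : ℕ → Set ℝ), (∀ k, MeasurableSet (B k)) →
      μ {x | ∀ k ∈ s, x k ∈ B k} = ∏ k ∈ s, gaussianReal 0 (ζ k) (B k))

include hprod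

lemma map_eval (k : ℕ) : μ.map (fun x => x k) = gaussianReal 0 (ζ k) := by
  ext s hs
  rw [Measure.map_apply (measurable_pi_apply k) hs]
  have h := hprod {k} (fun _ => s) (fun _ => hs)
  have hset : (fun x : ℕ → ℝ => x k) ⁻¹' s = {x : ℕ → ℝ | ∀ j ∈ ({k} : Finset ℕ), x j ∈ s} := by
    ext x; simp
  rw [hset, h, Finset.prod_singleton]

lemma map_restrict (n : ℕ) :
    μ.map (fun x (i : Fin n) => x (i : ℕ))
      = Measure.pi fun i : Fin n => gaussianReal 0 (ζ i) := by
  classical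
  refine (Measure.pi_eq fun s hs => ?_).symm
  rw [Measure.map_apply
    (measurable_pi_lambda (fun (x : ℕ → ℝ) (i : Fin n) => x (i:ℕ)) fun i => measurable_pi_apply _)
    (MeasurableSet.univ_pi hs)]
  set B : ℕ → Set ℝ := fun k => if h : k < n then s ⟨k, h⟩ else univ with hB
  have hBm : ∀ k, MeasurableSet (B k) := by
    intro k
    rw [hB]
    dsimp only
    split
    · exact hs _
    · exact MeasurableSet.univ
  have hset : (fun x (i : Fin n) => x (i : ℕ)) ⁻¹' (univ.pi s)
      = {x : ℕ → ℝ | ∀ k ∈ Finset.range n, x k ∈ B k} := by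
    ext x
    simp only [mem_preimage, Set.mem_pi, Set.mem_univ, forall_true_left, true_implies,
      mem_setOf_eq, Finset.mem_range, hB]
    constructor
    · intro h k hk
      rw [dif_pos hk]
      exact h ⟨k, hk⟩
    · intro h i
      have := h i i.isLt
      rwa [dif_pos i.isLt, Fin.eta] at this
  rw [hset, hprod _ _ hBm, ← Fin.prod_univ_eq_prod_range fun k => gaussianReal 0 (ζ k) (B k)]
  refine Finset.prod_congr rfl fun i _ => ?_
  rw [hB]
  dsimp only
  rw [dif_pos i.isLt, Fin.eta]

lemma finite_integral (hζ : ∀ k, 0 < ζ k) (a : ℕ → ℝ) (α : ℝ) (hα : 0 < α) (n : ℕ) :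
    ∫ x, rexp (-(α/2) * ∑ k ∈ Finset.range n, (x k - a k)^2) ∂μ
      = ∏ k ∈ Finset.range n, ((1 + α * (ζ k : ℝ)) ^ (-(1:ℝ)/2)
          * rexp (-α * (a k)^2 / (2*(1+α*(ζ k : ℝ))))) := by
  have h1 : (fun x : ℕ → ℝ => rexp (-(α/2) * ∑ k ∈ Finset.range n, (x k - a k)^2))
      = fun x => ∏ k ∈ Finset.range n, rexp (-(α/2) * (x k - a k)^2) := by
    funext x
    rw [← Real.exp_sum, Finset.mul_sum]
  rw [h1]
  have h2 : ∀ x : ℕ → ℝ, ∏ k ∈ Finset.range n, rexp (-(α/2) * (x k - a k)^2)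
      = ∏ i : Fin n, rexp (-(α/2) * (x (i:ℕ) - a (i:ℕ))^2) := by
    intro x
    rw [← Fin.prod_univ_eq_prod_range]
  simp_rw [h2]
  have h3 : ∫ x, ∏ i : Fin n, rexp (-(α/2) * (x (i:ℕ) - a (i:ℕ))^2) ∂μ
      = ∫ y : Fin n → ℝ, ∏ i : Fin n, rexp (-(α/2) * (y i - a (i:ℕ))^2)
          ∂(Measure.pi fun i : Fin n => gaussianReal 0 (ζ i)) := by
    rw [← map_restrict ζ μ hprod n,
      integral_map (f := fun y : Fin n → ℝ => ∏ i : Fin n, rexp (-(α/2) * (y i - a (i:ℕ))^2))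
        (measurable_pi_lambda (fun (x : ℕ → ℝ) (i : Fin n) => x (i:ℕ))
          fun i => measurable_pi_apply _).aemeasurable
        (Measurable.aestronglyMeasurable (by measurability))]
  rw [h3]
  have key : ∫ y : Fin n → ℝ, ∏ i : Fin n, rexp (-(α/2) * (y i - a (i:ℕ))^2)
        ∂(Measure.pi fun i : Fin n => gaussianReal 0 (ζ i))
      = ∏ i : Fin n, ∫ y : ℝ, rexp (-(α/2) * (y - a (i:ℕ))^2) ∂(gaussianReal 0 (ζ i)) := by
    exact @MeasureTheory.integral_fin_nat_prod_eq_prod ℝ _ n (fun _ => ℝ)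
      (fun _ => inferInstance) (fun i => gaussianReal 0 (ζ i))
      (fun i => inferInstanceAs (SigmaFinite (gaussianReal 0 (ζ i))))
      (fun i y => rexp (-(α/2) * (y - a (i:ℕ))^2))
  rw [key, ← Fin.prod_univ_eq_prod_range]
  exact Finset.prod_congr rfl fun i _ => gauss_exp_int α hα (a i) (ζ i) (hζ i)

end

lemma tsum_toReal_bridge (f : ℕ → ℝ) (hf : ∀ k, 0 ≤ f k) :
    ∑' k, f k = (∑' k, ENNReal.ofReal (f k)).toReal := by
  by_cases h : Summable f
  · rw [← ENNReal.ofReal_tsum_of_nonneg hf h, ENNReal.toReal_ofReal (tsum_nonneg hf)]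
  · rw [tsum_eq_zero_of_not_summable h]
    have htop : ∑' k, ENNReal.ofReal (f k) = ⊤ := by
      by_contra hc
      exact h (by simpa [ENNReal.toReal_ofReal, hf] using ENNReal.summable_toReal hc)
    simp [htop]

end GaussAux

section GaussAux2

open Real Set Filter
open scoped Topology

/-- Let `μ` be the product probability measure `⊗ₖ N(0, ζ k)` on `ℝ^ℕ`
(characterized by its values on measurable cylinder sets), where `ζ k > 0` and
`Σ ζ k < ∞`.  If `(a k)` is square-summable and `α > 0`, then for `μ`-a.e. `x`
the series `Σ (x k − a k)²` converges, the function
`x ↦ exp(−(α/2) Σ (x k − a k)²)` is `μ`-integrable, the infinite product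
`∏ₖ (1+αζ k)^(−1/2) exp(−α a k² / (2(1+αζ k)))` converges, and the integral equals it. -/
theorem integral_exp_neg_shifted_sq_productGaussian
    (ζ : ℕ → ℝ≥0) (hζ : ∀ k, 0 < ζ k) (hζsum : Summable fun k => (ζ k : ℝ))
    (a : ℕ → ℝ) (ha : Summable fun k => (a k) ^ 2)
    (α : ℝ) (hα : 0 < α)
    (μ : Measure (ℕ → ℝ)) [IsProbabilityMeasure μ]
    (hprod : ∀ (s : Finset ℕ) (B : ℕ → Set ℝ), (∀ k, MeasurableSet (B k)) →
      μ {x | ∀ k ∈ s, x k ∈ B k} = ∏ k ∈ s, gaussianReal 0 (ζ k) (B k)) :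
    (∀ᵐ x ∂μ, Summable fun k => (x k - a k) ^ 2) ∧
    Integrable (fun x => Real.exp (-(α / 2) * ∑' k, (x k - a k) ^ 2)) μ ∧
    Multipliable (fun k => (1 + α * (ζ k : ℝ)) ^ (-(1 : ℝ) / 2)
      * Real.exp (-α * (a k) ^ 2 / (2 * (1 + α * (ζ k : ℝ))))) ∧
    ∫ x, Real.exp (-(α / 2) * ∑' k, (x k - a k) ^ 2) ∂μ
      = ∏' k, (1 + α * (ζ k : ℝ)) ^ (-(1 : ℝ) / 2)
          * Real.exp (-α * (a k) ^ 2 / (2 * (1 + α * (ζ k : ℝ)))) := by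
  -- notation
  set c : ℕ → ℝ := fun k => (1 + α * (ζ k : ℝ)) ^ (-(1 : ℝ) / 2)
      * Real.exp (-α * (a k) ^ 2 / (2 * (1 + α * (ζ k : ℝ)))) with hc
  have hA : ∀ k, (0:ℝ) < 1 + α * (ζ k : ℝ) := fun k => by
    have := (hζ k : (0:ℝ) < (ζ k : ℝ))
    positivity
  -- a.e. summability
  have hterm_meas : ∀ k, Measurable fun x : ℕ → ℝ => ENNReal.ofReal ((x k - a k) ^ 2) :=
    fun k => (((measurable_pi_apply k).sub_const _).pow_const 2).ennreal_ofReal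
  set G : (ℕ → ℝ) → ℝ≥0∞ := fun x => ∑' k, ENNReal.ofReal ((x k - a k) ^ 2) with hG
  have hGmeas : Measurable G := Measurable.ennreal_tsum hterm_meas
  have hGlint : ∫⁻ x, G x ∂μ = ∑' k, ENNReal.ofReal ((ζ k : ℝ) + (a k) ^ 2) := by
    rw [hG]
    rw [lintegral_tsum fun k => (hterm_meas k).aemeasurable]
    congr 1
    funext k
    have : ∫⁻ x, ENNReal.ofReal ((x k - a k) ^ 2) ∂μ
        = ∫⁻ y, ENNReal.ofReal ((y - a k) ^ 2) ∂(gaussianReal 0 (ζ k)) := by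
      rw [← map_eval ζ μ hprod k,
        lintegral_map (((measurable_id'.sub_const _).pow_const 2).ennreal_ofReal)
          (measurable_pi_apply k)]
    rw [this, lintegral_shift_sq_gauss _ _ (hζ k)]
  have hGfin : ∫⁻ x, G x ∂μ ≠ ⊤ := by
    rw [hGlint, ← ENNReal.ofReal_tsum_of_nonneg
      (fun k => by positivity) (hζsum.add ha)]
    exact ENNReal.ofReal_ne_top
  have hae : ∀ᵐ x ∂μ, Summable fun k => (x k - a k) ^ 2 := by
    filter_upwards [ae_lt_top hGmeas hGfin] with x hx
    have := ENNReal.summable_toReal hx.ne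
    simpa [ENNReal.toReal_ofReal, sq_nonneg] using this
  -- multipliable
  have hcpos : ∀ k, 0 < c k := fun k => by
    have := hA k
    positivity
  have hlog : Summable fun k => Real.log (c k) := by
    have hlogeq : ∀ k, Real.log (c k)
        = (-(1:ℝ)/2) * Real.log (1 + α * (ζ k : ℝ))
          + (-α * (a k) ^ 2 / (2 * (1 + α * (ζ k : ℝ)))) := by
      intro k
      rw [hc]
      rw [Real.log_mul (by positivity) (Real.exp_ne_zero _), Real.log_rpow (hA k), Real.log_exp]
    apply Summable.congr _ (fun k => (hlogeq k).symm)
    apply Summable.add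
    · apply Summable.mul_left
      apply Summable.of_nonneg_of_le
        (fun k => Real.log_nonneg (by nlinarith [mul_pos hα (NNReal.coe_pos.mpr (hζ k))]))
        (fun k => ?_) (hζsum.mul_left α)
      calc Real.log (1 + α * (ζ k : ℝ)) ≤ (1 + α * (ζ k : ℝ)) - 1 :=
            Real.log_le_sub_one_of_pos (hA k)
        _ = α * (ζ k : ℝ) := by ring
    · rw [← summable_neg_iff]
      apply Summable.of_nonneg_of_le (fun k => ?_) (fun k => ?_) (ha.mul_left (α/2))
      · have := hA k
        have hnum : 0 ≤ α * (a k)^2 := by positivity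
        have : -(-α * (a k) ^ 2 / (2 * (1 + α * (ζ k : ℝ))))
            = α * (a k) ^ 2 / (2 * (1 + α * (ζ k : ℝ))) := by ring
        rw [this]
        positivity
      · have hAk := hA k
        have : -(-α * (a k) ^ 2 / (2 * (1 + α * (ζ k : ℝ))))
            = α * (a k) ^ 2 / (2 * (1 + α * (ζ k : ℝ))) := by ring
        rw [this]
        rw [div_le_iff₀ (by positivity)]
        have h1 : (1:ℝ) ≤ 1 + α * (ζ k : ℝ) := by
          nlinarith [mul_pos hα (NNReal.coe_pos.mpr (hζ k))]
        nlinarith [mul_nonneg (mul_nonneg hα.le (sq_nonneg (a k)))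
          (mul_pos hα (NNReal.coe_pos.mpr (hζ k))).le]
    done
  have hmul : Multipliable c :=
    Real.multipliable_of_summable_log hcpos hlog
  -- tsum bridge and measurability of the integrand
  have hbridge : ∀ x : ℕ → ℝ, ∑' k, (x k - a k) ^ 2 = (G x).toReal := fun x =>
    tsum_toReal_bridge _ (fun k => sq_nonneg _)
  have hfmeas : Measurable fun x : ℕ → ℝ => rexp (-(α / 2) * ∑' k, (x k - a k) ^ 2) := by
    have : (fun x : ℕ → ℝ => rexp (-(α / 2) * ∑' k, (x k - a k) ^ 2))
        = fun x => rexp (-(α / 2) * (G x).toReal) := by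
      funext x; rw [hbridge x]
    rw [this]
    exact (Real.measurable_exp.comp ((hGmeas.ennreal_toReal).const_mul _))
  have hbound : ∀ᵐ x ∂μ, ‖rexp (-(α / 2) * ∑' k, (x k - a k) ^ 2)‖ ≤ 1 := by
    filter_upwards with x
    rw [Real.norm_eq_abs, Real.abs_exp, Real.exp_le_one_iff]
    have h1 : 0 ≤ ∑' k, (x k - a k) ^ 2 := tsum_nonneg fun k => sq_nonneg _
    nlinarith
  have hint : Integrable (fun x => rexp (-(α / 2) * ∑' k, (x k - a k) ^ 2)) μ := by
    refine Integrable.mono' (integrable_const 1) hfmeas.aestronglyMeasurable hbound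
  refine ⟨hae, hint, hmul, ?_⟩
  -- dominated convergence
  set F : ℕ → (ℕ → ℝ) → ℝ := fun n x => rexp (-(α/2) * ∑ k ∈ Finset.range n, (x k - a k)^2)
    with hF
  have hFmeas : ∀ n, AEStronglyMeasurable (F n) μ := by
    intro n
    apply Measurable.aestronglyMeasurable
    apply Real.measurable_exp.comp
    apply Measurable.const_mul
    exact Finset.measurable_sum _ fun k _ => ((measurable_pi_apply k).sub_const _).pow_const 2
  have hFbound : ∀ n, ∀ᵐ x ∂μ, ‖F n x‖ ≤ (1:ℝ) := by
    intro n
    filter_upwards with x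
    rw [hF]
    simp only
    rw [Real.norm_eq_abs, Real.abs_exp, Real.exp_le_one_iff]
    have h1 : 0 ≤ ∑ k ∈ Finset.range n, (x k - a k) ^ 2 :=
      Finset.sum_nonneg fun k _ => sq_nonneg _
    nlinarith
  have hFlim : ∀ᵐ x ∂μ, Tendsto (fun n => F n x) atTop
      (𝓝 (rexp (-(α / 2) * ∑' k, (x k - a k) ^ 2))) := by
    filter_upwards [hae] with x hx
    have h1 : Tendsto (fun n => ∑ k ∈ Finset.range n, (x k - a k) ^ 2) atTop
        (𝓝 (∑' k, (x k - a k) ^ 2)) := hx.hasSum.tendsto_sum_nat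
    have h2 : Tendsto (fun n => -(α/2) * ∑ k ∈ Finset.range n, (x k - a k) ^ 2) atTop
        (𝓝 (-(α/2) * ∑' k, (x k - a k) ^ 2)) := h1.const_mul _
    exact (Real.continuous_exp.tendsto _).comp h2
  have hDCT := MeasureTheory.tendsto_integral_of_dominated_convergence
    (fun _ => (1:ℝ)) hFmeas (integrable_const 1) hFbound hFlim
  have hIF : ∀ n, ∫ x, F n x ∂μ = ∏ k ∈ Finset.range n, c k := fun n =>
    finite_integral ζ μ hprod hζ a α hα n
  simp_rw [hIF] at hDCT
  have hPT : Tendsto (fun n => ∏ k ∈ Finset.range n, c k) atTop (𝓝 (∏' k, c k)) :=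
    hmul.hasProd.tendsto_prod_nat
  exact tendsto_nhds_unique hDCT hPT

end GaussAux2
end

section
/- Let (ζ_k)_{k∈ℕ} be strictly positive reals with Σ_k ζ_k < ∞ and let μ = ⊗_{k∈ℕ} N(0,ζ_k) be the product probability measure on ℝ^ℕ. Then for every square-summable real sequence (a_k)_{k∈ℕ} and every r > 0, μ({x ∈ ℝ^ℕ : Σ_k (x_k − a_k)² < r²}) > 0. -/
open MeasureTheory ProbabilityTheory Real Set
open scoped NNReal ENNReal

lemma sqmoment_std_lt_top :
    ∫⁻ y, ENNReal.ofReal (y ^ 2) ∂(gaussianReal 0 1) < ∞ := by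
  rw [gaussianReal_of_var_ne_zero 0 one_ne_zero,
    lintegral_withDensity_eq_lintegral_mul _ (measurable_gaussianPDF 0 1)
      (by fun_prop)]
  have hint : Integrable (fun y : ℝ => gaussianPDFReal 0 1 y * y ^ 2) := by
    have h := integrable_rpow_mul_exp_neg_mul_sq (b := (1:ℝ)/2) (by norm_num)
      (s := 2) (by norm_num)
    apply ((h.const_mul ((Real.sqrt (2 * π * (1:ℝ≥0)))⁻¹)).congr ?_)
    filter_upwards with y
    simp only [gaussianPDFReal]
    rw [Real.rpow_two]
    push_cast
    ring_nf
  have := hint.lintegral_lt_top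
  refine lt_of_le_of_lt (le_of_eq ?_) this
  apply lintegral_congr fun y => ?_
  simp only [Pi.mul_apply, gaussianPDF]
  rw [← ENNReal.ofReal_mul (gaussianPDFReal_nonneg 0 1 y)]

lemma sqmoment_scale (v : ℝ≥0) :
    ∫⁻ y, ENNReal.ofReal (y ^ 2) ∂(gaussianReal 0 v)
      = v * ∫⁻ y, ENNReal.ofReal (y ^ 2) ∂(gaussianReal 0 1) := by
  have h : (gaussianReal 0 1).map (· * Real.sqrt v) = gaussianReal 0 v := by
    rw [gaussianReal_map_mul_const]
    congr 1
    · simp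
    · rw [mul_one]
      ext
      exact Real.sq_sqrt v.coe_nonneg
  rw [← h, lintegral_map (by fun_prop) (by fun_prop)]
  have : ∀ y : ℝ, ENNReal.ofReal ((y * Real.sqrt v) ^ 2)
      = ENNReal.ofReal (y ^ 2) * ENNReal.ofReal (v : ℝ) := by
    intro y
    rw [← ENNReal.ofReal_mul (sq_nonneg _), mul_pow, Real.sq_sqrt v.coe_nonneg]
  simp_rw [this]
  rw [lintegral_mul_const _ (by fun_prop), ENNReal.ofReal_coe_nnreal, mul_comm]

/-- Let `μ` be the product probability measure `⊗ₖ N(0, ζ k)` on `ℝ^ℕ`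
(characterized by its values on measurable cylinder sets), where `ζ k > 0` and
`Σ ζ k < ∞`.  Then for every square-summable `(a k)` and every `r > 0`, the set
of `x` with `Σ (x k − a k)²` convergent and `< r²` has positive `μ`-measure. -/
theorem productGaussian_ball_pos
    (ζ : ℕ → ℝ≥0) (hζ : ∀ k, 0 < ζ k) (hζsum : Summable fun k => (ζ k : ℝ))
    (μ : Measure (ℕ → ℝ)) [IsProbabilityMeasure μ]
    (hprod : ∀ (s : Finset ℕ) (B : ℕ → Set ℝ), (∀ k, MeasurableSet (B k)) →
      μ {x | ∀ k ∈ s, x k ∈ B k} = ∏ k ∈ s, gaussianReal 0 (ζ k) (B k))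
    (a : ℕ → ℝ) (ha : Summable fun k => (a k) ^ 2) (r : ℝ) (hr : 0 < r) :
    0 < μ {x | (Summable fun k => (x k - a k) ^ 2) ∧
      ∑' k, (x k - a k) ^ 2 < r ^ 2} := by
  set C : ℝ≥0∞ := ∫⁻ y, ENNReal.ofReal (y ^ 2) ∂(gaussianReal 0 1) with hCdef
  have hC : C < ∞ := sqmoment_std_lt_top
  set W : ℕ → ℝ≥0∞ :=
    fun k => ∫⁻ y, ENNReal.ofReal ((y - a k) ^ 2) ∂(gaussianReal 0 (ζ k)) with hWdef
  -- bound on W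
  have hW : ∀ k, W k ≤ 2 * ((ζ k : ℝ≥0∞) * C) + ENNReal.ofReal (2 * a k ^ 2) := by
    intro k
    have h1 : W k ≤ ∫⁻ y, (ENNReal.ofReal (2 * y ^ 2) + ENNReal.ofReal (2 * a k ^ 2))
        ∂(gaussianReal 0 (ζ k)) := by
      refine lintegral_mono fun y => ?_
      rw [← ENNReal.ofReal_add (by positivity) (by positivity)]
      exact ENNReal.ofReal_le_ofReal (by nlinarith [sq_nonneg (y + a k)])
    rw [lintegral_add_right _ measurable_const, lintegral_const, measure_univ, mul_one] at h1
    refine h1.trans (le_of_eq ?_)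
    congr 1
    have : ∀ y : ℝ, ENNReal.ofReal (2 * y ^ 2) = 2 * ENNReal.ofReal (y ^ 2) := by
      intro y
      rw [ENNReal.ofReal_mul (by norm_num : (0:ℝ) ≤ 2)]
      norm_num
    simp_rw [this]
    rw [lintegral_const_mul _ (by fun_prop), sqmoment_scale, ← hCdef]
  -- summability of the bounds
  have hsum : (∑' k, W k) ≠ ∞ := by
    refine ne_top_of_le_ne_top ?_ (ENNReal.tsum_le_tsum hW)
    rw [ENNReal.tsum_add, ENNReal.tsum_mul_left, ENNReal.tsum_mul_right]
    apply ENNReal.add_ne_top.2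
    constructor
    · exact ENNReal.mul_ne_top (by norm_num) (ENNReal.mul_ne_top
        (ENNReal.tsum_coe_ne_top_iff_summable.2 (NNReal.summable_coe.1 hζsum)) hC.ne)
    · rw [← ENNReal.ofReal_tsum_of_nonneg (fun n => by positivity) (ha.mul_left 2)]
      exact ENNReal.ofReal_ne_top
  -- choose N with small tail
  obtain ⟨N, hN⟩ : ∃ N, (∑' k, W (k + N)) < ENNReal.ofReal (r ^ 2 / 4) := by
    have htends := ENNReal.tendsto_sum_nat_add W hsum
    exact (htends.eventually_lt_const (ENNReal.ofReal_pos.2 (by positivity))).exists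
  -- the head box
  set δ : ℝ := r / (2 * ((N : ℝ) + 1)) with hδdef
  have hδpos : 0 < δ := by positivity
  set Bx : ℕ → Set ℝ := fun k => Set.Ioo (a k - δ) (a k + δ) with hBxdef
  set B : Set (ℕ → ℝ) := {x | ∀ k ∈ Finset.range N, x k ∈ Bx k} with hBdef
  have hMB : μ B = ∏ k ∈ Finset.range N, gaussianReal 0 (ζ k) (Bx k) :=
    hprod _ _ (fun k => measurableSet_Ioo)
  have hBpos : 0 < μ B := by
    rw [hMB, pos_iff_ne_zero]
    rw [Finset.prod_ne_zero_iff]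
    intro k _ h0
    have habs := gaussianReal_absolutelyContinuous' 0 (hζ k).ne'
    have hv : volume (Bx k) = 0 := habs h0
    rw [hBxdef] at hv
    simp only [Real.volume_Ioo] at hv
    rw [ENNReal.ofReal_eq_zero] at hv
    nlinarith
  -- key identity
  have key : ∀ m, N ≤ m →
      ∫⁻ x in B, ENNReal.ofReal ((x m - a m) ^ 2) ∂μ = μ B * W m := by
    intro m hm
    have hfm : Measurable fun x : ℕ → ℝ => (x m - a m) ^ 2 :=
      ((measurable_pi_apply m).sub measurable_const).pow measurable_const
    rw [lintegral_eq_lintegral_meas_le (μ.restrict B)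
      (Filter.Eventually.of_forall fun x => sq_nonneg _) hfm.aemeasurable]
    have hWm : W m = ∫⁻ t in Ioi (0:ℝ), gaussianReal 0 (ζ m) {y | t ≤ (y - a m) ^ 2} :=
      lintegral_eq_lintegral_meas_le _
        (Filter.Eventually.of_forall fun y => sq_nonneg _)
        ((measurable_id.sub measurable_const).pow measurable_const).aemeasurable
    rw [hWm, ← lintegral_const_mul' _ _ (measure_ne_top μ B)]
    refine lintegral_congr fun t => ?_
    have hset : MeasurableSet {x : ℕ → ℝ | t ≤ (x m - a m) ^ 2} :=
      measurableSet_le measurable_const hfm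
    rw [Measure.restrict_apply hset]
    have hmN : m ∉ Finset.range N := by simp [Finset.mem_range, not_lt.2 hm]
    set D : ℕ → Set ℝ := fun k => if k = m then {y : ℝ | t ≤ (y - a m) ^ 2} else Bx k with hDdef
    have hD : ∀ k, MeasurableSet (D k) := by
      intro k
      rw [hDdef]
      dsimp only
      split
      · exact measurableSet_le measurable_const
          ((measurable_id.sub measurable_const).pow measurable_const)
      · exact measurableSet_Ioo
    have hEq : {x : ℕ → ℝ | t ≤ (x m - a m) ^ 2} ∩ B
        = {x | ∀ k ∈ insert m (Finset.range N), x k ∈ D k} := by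
      ext x
      simp only [Set.mem_inter_iff, Set.mem_setOf_eq, Finset.mem_insert, hBdef, hDdef]
      constructor
      · rintro ⟨h1, h2⟩ k hk
        rcases hk with rfl | hk
        · simpa using h1
        · have hkm : k ≠ m := by
            rintro rfl
            exact hmN hk
          simpa [hkm] using h2 k hk
      · intro h
        refine ⟨by simpa using h m (Or.inl rfl), fun k hk => ?_⟩
        have hkm : k ≠ m := by
          rintro rfl
          exact hmN hk
        simpa [hkm] using h k (Or.inr hk)
    rw [hEq, hprod _ D hD, Finset.prod_insert hmN]
    have hcongr : ∀ k ∈ Finset.range N,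
        gaussianReal 0 (ζ k) (D k) = gaussianReal 0 (ζ k) (Bx k) := by
      intro k hk
      have hkm : k ≠ m := by
        rintro rfl
        exact hmN hk
      simp [hDdef, hkm]
    rw [Finset.prod_congr rfl hcongr, ← hMB]
    simp only [hDdef, if_pos rfl]
    ring
  -- tail functional
  set g : (ℕ → ℝ) → ℝ≥0∞ :=
    fun x => ∑' k, ENNReal.ofReal ((x (k + N) - a (k + N)) ^ 2) with hgdef
  have hgmeas : Measurable g := by
    apply Measurable.ennreal_tsum
    intro k
    exact (((measurable_pi_apply (k + N)).sub measurable_const).pow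
      measurable_const).ennreal_ofReal
  have hint : ∫⁻ x in B, g x ∂μ ≤ μ B * ENNReal.ofReal (r ^ 2 / 4) := by
    rw [hgdef]
    rw [lintegral_tsum (fun k => (((measurable_pi_apply (k + N)).sub
      measurable_const).pow measurable_const).ennreal_ofReal.aemeasurable)]
    calc ∑' k, ∫⁻ x in B, ENNReal.ofReal ((x (k + N) - a (k + N)) ^ 2) ∂μ
        = ∑' k, μ B * W (k + N) := tsum_congr fun k => key (k + N) (Nat.le_add_left N k)
      _ = μ B * ∑' k, W (k + N) := ENNReal.tsum_mul_left
      _ ≤ μ B * ENNReal.ofReal (r ^ 2 / 4) := mul_le_mul_right hN.le _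
  set c : ℝ≥0∞ := ENNReal.ofReal (r ^ 2 / 2) with hcdef
  have hcne : c ≠ 0 := (ENNReal.ofReal_pos.2 (by positivity)).ne'
  have hctop : c ≠ ⊤ := ENNReal.ofReal_ne_top
  have hmark : c * μ ({x | c ≤ g x} ∩ B) ≤ μ B * ENNReal.ofReal (r ^ 2 / 4) := by
    have h := mul_meas_ge_le_lintegral₀ (μ := μ.restrict B) hgmeas.aemeasurable c
    rw [Measure.restrict_apply (measurableSet_le measurable_const hgmeas)] at h
    exact h.trans hint
  have hlt : μ ({x | c ≤ g x} ∩ B) < μ B := by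
    have h2 : μ B * ENNReal.ofReal (r ^ 2 / 4) < μ B * c := by
      refine (ENNReal.mul_lt_mul_iff_right hBpos.ne' (measure_ne_top μ B)).2 ?_
      rw [hcdef]
      exact ENNReal.ofReal_lt_ofReal_iff_of_nonneg (by positivity) |>.2 (by nlinarith)
    have h3 : c * μ ({x | c ≤ g x} ∩ B) < c * μ B := by
      calc c * μ ({x | c ≤ g x} ∩ B) ≤ μ B * ENNReal.ofReal (r ^ 2 / 4) := hmark
        _ < μ B * c := h2
        _ = c * μ B := mul_comm _ _
    exact (ENNReal.mul_lt_mul_iff_right hcne hctop).1 h3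
  have hpos : 0 < μ (B ∩ {x | g x < c}) := by
    by_contra h
    rw [not_lt, le_zero_iff] at h
    have hsub : B ⊆ (B ∩ {x | g x < c}) ∪ ({x | c ≤ g x} ∩ B) := by
      intro x hx
      by_cases hgx : g x < c
      · exact Or.inl ⟨hx, hgx⟩
      · exact Or.inr ⟨not_lt.1 hgx, hx⟩
    have : μ B ≤ μ ({x | c ≤ g x} ∩ B) := by
      calc μ B ≤ μ ((B ∩ {x | g x < c}) ∪ ({x | c ≤ g x} ∩ B)) := measure_mono hsub
        _ ≤ μ (B ∩ {x | g x < c}) + μ ({x | c ≤ g x} ∩ B) := measure_union_le _ _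
        _ = μ ({x | c ≤ g x} ∩ B) := by rw [h, zero_add]
    exact absurd this hlt.not_ge
  refine hpos.trans_le (measure_mono ?_)
  rintro x ⟨hxB, hxg⟩
  simp only [Set.mem_setOf_eq] at hxg
  set f : ℕ → ℝ := fun k => (x k - a k) ^ 2 with hfdef
  have htail_summable : Summable fun k => f (k + N) := by
    have hne : (∑' k, ENNReal.ofReal (f (k + N))) ≠ ⊤ := (hxg.trans_le le_top).ne
    have h1 : Summable fun k => (f (k + N)).toNNReal := by
      rw [← ENNReal.tsum_coe_ne_top_iff_summable]
      exact hne
    have h2 := NNReal.summable_coe.2 h1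
    refine h2.congr fun k => ?_
    exact Real.coe_toNNReal _ (sq_nonneg _)
  have hfull : Summable f := (summable_nat_add_iff N).1 htail_summable
  have htail_lt : ∑' k, f (k + N) < r ^ 2 / 2 := by
    have h1 : ENNReal.ofReal (∑' k, f (k + N)) < ENNReal.ofReal (r ^ 2 / 2) := by
      rw [ENNReal.ofReal_tsum_of_nonneg (fun k => sq_nonneg _) htail_summable]
      exact hxg
    exact (ENNReal.ofReal_lt_ofReal_iff_of_nonneg
      (tsum_nonneg fun k => sq_nonneg _)).1 h1
  have hhead : ∑ k ∈ Finset.range N, f k ≤ (N : ℝ) * δ ^ 2 := by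
    calc ∑ k ∈ Finset.range N, f k ≤ ∑ k ∈ Finset.range N, δ ^ 2 := by
          refine Finset.sum_le_sum fun k hk => ?_
          have hx := hxB k hk
          rw [hBxdef] at hx
          obtain ⟨h1, h2⟩ := hx
          show (x k - a k) ^ 2 ≤ δ ^ 2
          nlinarith [mul_pos (by linarith : (0:ℝ) < a k + δ - x k)
            (by linarith : (0:ℝ) < x k - (a k - δ))]
      _ = (N : ℝ) * δ ^ 2 := by
          rw [Finset.sum_const, Finset.card_range, nsmul_eq_mul]
  have hheadbound : (N : ℝ) * δ ^ 2 ≤ r ^ 2 / 4 := by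
    have hN0 : (0 : ℝ) ≤ (N : ℝ) := Nat.cast_nonneg N
    calc (N : ℝ) * δ ^ 2 = (N : ℝ) * r ^ 2 / (2 * ((N : ℝ) + 1)) ^ 2 := by
          rw [hδdef, div_pow, mul_div_assoc]
      _ ≤ r ^ 2 / 4 := by
          rw [div_le_div_iff₀ (by positivity) (by norm_num)]
          nlinarith [mul_nonneg (sq_nonneg r)
            (by positivity : (0:ℝ) ≤ (N:ℝ) ^ 2 + (N:ℝ) + 1)]
  constructor
  · exact hfull
  · have hsplit := Summable.sum_add_tsum_nat_add' (f := f) (k := N) htail_summable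
    calc ∑' k, f k = ∑ k ∈ Finset.range N, f k + ∑' k, f (k + N) := hsplit.symm
      _ < r ^ 2 / 4 + r ^ 2 / 2 := by
          have := hhead.trans hheadbound
          linarith
      _ < r ^ 2 := by nlinarith
end

section
/- Let d be a positive integer and let (λ_k)_{k≥1} be a sequence of positive reals satisfying the lower Weyl bound λ_k ≥ c·k^{2/d} for all k ≥ 1, for some constant c > 0. Then for every ε > d/2 there exists a constant C_ε > 0 such that for all t > 0, Σ_{k≥1} λ_k² · e^{−4tλ_k} · (1 − e^{−2tλ_k})^{−2} ≤ C_ε · t^{−(2+ε)}. -/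
open scoped ENNReal
open Nat

lemma one_add_pow_div_le_exp (m : ℕ) (hm : 1 ≤ m) {x : ℝ} (hx : 0 ≤ x) :
    1 + x ^ m / m ! ≤ Real.exp x := by
  have h := Real.sum_le_exp_of_nonneg hx (m + 1)
  refine le_trans ?_ h
  have hsub : ({0, m} : Finset ℕ) ⊆ Finset.range (m + 1) := by
    intro i hi
    simp only [Finset.mem_insert, Finset.mem_singleton] at hi
    rcases hi with h | h <;> simp [h] <;> omega
  have : (1 : ℝ) + x ^ m / m ! = ∑ i ∈ ({0, m} : Finset ℕ), x ^ i / i ! := by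
    rw [Finset.sum_pair (by omega : 0 ≠ m)]; simp
  rw [this]
  exact Finset.sum_le_sum_of_subset_of_nonneg hsub (by intro i _ _; positivity)

lemma rpow_le_const_mul_exp_sub_one {σ : ℝ} (hσ : 1 ≤ σ) {x : ℝ} (hx : 0 < x) :
    x ^ σ ≤ 2 * (⌊σ⌋₊ + 1)! * (Real.exp x - 1) := by
  set n := ⌊σ⌋₊ with hn
  have hn1 : (n : ℝ) ≤ σ := Nat.floor_le (by linarith)
  have hn2 : σ ≤ (n : ℝ) + 1 := (Nat.lt_floor_add_one σ).le
  have hxn : x ^ σ ≤ x ^ n + x ^ (n + 1) := by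
    rcases le_total x 1 with h1 | h1
    · calc x ^ σ ≤ x ^ (n : ℝ) := Real.rpow_le_rpow_of_exponent_ge hx h1 hn1
        _ = x ^ n := Real.rpow_natCast x n
        _ ≤ x ^ n + x ^ (n + 1) := le_add_of_nonneg_right (by positivity)
    · calc x ^ σ ≤ x ^ ((n : ℝ) + 1) := Real.rpow_le_rpow_of_exponent_le h1 hn2
        _ = x ^ (n + 1) := by rw [← Real.rpow_natCast x (n + 1)]; push_cast; ring_nf
        _ ≤ x ^ n + x ^ (n + 1) := le_add_of_nonneg_left (by positivity)
  have e1 : 1 + x ^ n / n ! ≤ Real.exp x := one_add_pow_div_le_exp n (Nat.le_floor (by exact_mod_cast hσ)) hx.le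
  have e2 : 1 + x ^ (n + 1) / (n + 1)! ≤ Real.exp x := one_add_pow_div_le_exp (n + 1) (by omega) hx.le
  have hfac : (n ! : ℝ) ≤ ((n + 1)! : ℝ) := by
    exact_mod_cast Nat.factorial_le (Nat.le_succ n)
  have hfp : (0 : ℝ) < n ! := by exact_mod_cast n.factorial_pos
  have hfp1 : (0 : ℝ) < ((n + 1)! : ℕ) := by exact_mod_cast (n + 1).factorial_pos
  have hex : (0 : ℝ) ≤ Real.exp x - 1 := by nlinarith [Real.add_one_le_exp x]
  have b1 : x ^ n ≤ ((n + 1)! : ℝ) * (Real.exp x - 1) := by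
    have h1 : x ^ n / (n ! : ℝ) ≤ Real.exp x - 1 := by linarith
    have h2 : x ^ n ≤ (Real.exp x - 1) * (n ! : ℝ) := (div_le_iff₀ hfp).mp h1
    nlinarith
  have b2 : x ^ (n + 1) ≤ ((n + 1)! : ℝ) * (Real.exp x - 1) := by
    have h1 : x ^ (n + 1) / ((n + 1)! : ℝ) ≤ Real.exp x - 1 := by linarith
    have h2 : x ^ (n + 1) ≤ (Real.exp x - 1) * ((n + 1)! : ℝ) := (div_le_iff₀ hfp1).mp h1
    linarith
  calc x ^ σ ≤ x ^ n + x ^ (n + 1) := hxn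
    _ ≤ 2 * (n + 1)! * (Real.exp x - 1) := by push_cast; nlinarith

lemma term_bound (σ : ℝ) (hσ : 1 ≤ σ) (t L : ℝ) (ht : 0 < t) (hL : 0 < L) :
    L ^ 2 * Real.exp (-4 * t * L) * (1 - Real.exp (-2 * t * L)) ^ (-(2 : ℝ))
      ≤ ((2 * (⌊σ⌋₊ + 1)! : ℕ) : ℝ) ^ 2 * (2 : ℝ) ^ (-(2 * σ)) * t ^ (-(2 * σ))
        * L ^ (2 - 2 * σ) := by
  set x := 2 * t * L with hxdef
  have hx : 0 < x := by positivity
  have hE : 0 < Real.exp x - 1 := by nlinarith [Real.add_one_le_exp x]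
  have hy : Real.exp (-x) < 1 := Real.exp_lt_one_iff.mpr (by linarith)
  have h0 : 0 < 1 - Real.exp (-x) := by linarith
  have heq : L ^ 2 * Real.exp (-4 * t * L) * (1 - Real.exp (-2 * t * L)) ^ (-(2 : ℝ))
      = (L / (Real.exp x - 1)) ^ 2 := by
    have h2 : -2 * t * L = -x := by rw [hxdef]; ring
    have h4 : Real.exp (-4 * t * L) = Real.exp (-x) ^ 2 := by
      rw [← Real.exp_nat_mul]; norm_num; ring_nf; rw [hxdef]; ring
    have hrp : (1 - Real.exp (-x)) ^ (-(2 : ℝ)) = ((1 - Real.exp (-x)) ^ 2)⁻¹ := by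
      rw [show (-(2:ℝ)) = ((-2 : ℤ) : ℝ) by norm_num, Real.rpow_intCast]
      rw [zpow_neg]; norm_cast
    rw [h2, h4, hrp]
    have hfac : Real.exp x - 1 = Real.exp x * (1 - Real.exp (-x)) := by
      rw [mul_sub, mul_one, ← Real.exp_add]; simp
    rw [hfac, div_pow, mul_pow]
    rw [Real.exp_neg x]
    field_simp
  rw [heq]
  set M : ℝ := ((2 * (⌊σ⌋₊ + 1)! : ℕ) : ℝ) with hMdef
  have hM : (0:ℝ) < M := by rw [hMdef]; positivity
  have hxσ : (0:ℝ) < x ^ σ := Real.rpow_pos_of_pos hx σ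
  have hstep : L / (Real.exp x - 1) ≤ M * L * x ^ (-σ) := by
    have hkey := rpow_le_const_mul_exp_sub_one hσ hx
    have hkey' : x ^ σ ≤ M * (Real.exp x - 1) := by rw [hMdef]; push_cast; linarith
    rw [Real.rpow_neg hx.le, div_le_iff₀ hE]
    calc L = (x ^ σ * L) * (x ^ σ)⁻¹ := by field_simp
      _ ≤ (M * (Real.exp x - 1) * L) * (x ^ σ)⁻¹ := by
          have := mul_le_mul_of_nonneg_right hkey' hL.le
          exact mul_le_mul_of_nonneg_right this (by positivity)
      _ = M * L * (x ^ σ)⁻¹ * (Real.exp x - 1) := by ring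
  have hxr : x ^ (-σ) * x ^ (-σ) = x ^ (-(2*σ)) := by rw [← Real.rpow_add hx]; ring_nf
  have hx2 : x ^ (-(2*σ)) = (2:ℝ) ^ (-(2*σ)) * t ^ (-(2*σ)) * L ^ (-(2*σ)) := by
    rw [hxdef, Real.mul_rpow (by positivity) hL.le, Real.mul_rpow (by norm_num) ht.le]
  have hL2 : L ^ 2 * L ^ (-(2*σ)) = L ^ (2 - 2*σ) := by
    rw [← Real.rpow_natCast L 2, ← Real.rpow_add hL]; ring_nf
  calc (L / (Real.exp x - 1)) ^ 2 ≤ (M * L * x ^ (-σ)) ^ 2 := by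
        apply pow_le_pow_left₀ (by positivity) hstep
    _ = M ^ 2 * (x ^ (-σ) * x ^ (-σ)) * L ^ 2 := by ring
    _ = M ^ 2 * ((2:ℝ) ^ (-(2*σ)) * t ^ (-(2*σ))) * (L ^ 2 * L ^ (-(2*σ))) := by
        rw [hxr, hx2]; ring
    _ = M ^ 2 * (2:ℝ) ^ (-(2*σ)) * t ^ (-(2*σ)) * L ^ (2 - 2*σ) := by rw [hL2]; ring

/-- If `λ_k ≥ c k^(2/d)` for `k ≥ 1`, then for every `ε > d/2` there is `C_ε > 0`
such that for all `t > 0`,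
`Σ_{k≥1} λ_k² e^(−4tλ_k) (1 − e^(−2tλ_k))^(−2) ≤ C_ε t^(−(2+ε))`. -/
theorem schatten4_Qt_bound
    (d : ℕ) (hd : 0 < d) (l : ℕ → ℝ) (hl : ∀ k : ℕ, 1 ≤ k → 0 < l k)
    (c : ℝ) (hc : 0 < c)
    (hlow : ∀ k : ℕ, 1 ≤ k → c * (k : ℝ) ^ ((2 : ℝ) / d) ≤ l k)
    (ε : ℝ) (hε : (d : ℝ) / 2 < ε) :
    ∃ C > 0, ∀ t > 0,
      (∑' k : ℕ, ENNReal.ofReal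
          (l (k + 1) ^ 2 * Real.exp (-4 * t * l (k + 1))
            * (1 - Real.exp (-2 * t * l (k + 1))) ^ (-(2 : ℝ))))
        ≤ ENNReal.ofReal (C * t ^ (-(2 + ε))) := by
  have hd1 : (1 : ℝ) ≤ (d : ℝ) := by exact_mod_cast hd
  have hε0 : 0 < ε := lt_of_le_of_lt (by linarith) hε
  set σ : ℝ := 1 + ε / 2 with hσdef
  have hσ : 1 ≤ σ := by simp [hσdef]; linarith
  set M : ℝ := ((2 * (⌊σ⌋₊ + 1)! : ℕ) : ℝ) with hMdef
  have hM : 0 < M := by rw [hMdef]; positivity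
  set q : ℝ := (2 / (d : ℝ)) * (-ε) with hqdef
  have hq : q < -1 := by
    rw [hqdef]
    rw [show (2 / (d:ℝ)) * (-ε) = -(2 * ε / d) by ring, neg_lt_neg_iff]
    rw [lt_div_iff₀ (by linarith : (0:ℝ) < (d:ℝ))]
    linarith
  -- summability of the comparison series
  have hg : Summable (fun k : ℕ => ((k : ℝ) + 1) ^ q) := by
    have h1 : Summable (fun n : ℕ => (n : ℝ) ^ q) := Real.summable_nat_rpow.mpr hq
    have h2 := (_root_.summable_nat_add_iff (f := fun n : ℕ => (n : ℝ) ^ q) 1).mpr h1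
    simpa using h2
  set S : ℝ := ∑' k : ℕ, ((k : ℝ) + 1) ^ q with hSdef
  have hS : 0 < S := by
    rw [hSdef]
    apply Summable.tsum_pos hg (fun k => by positivity) 0
    norm_num
  refine ⟨M ^ 2 * (2 : ℝ) ^ (-(2 + ε)) * c ^ (-ε) * S, by positivity, fun t ht => ?_⟩
  have h2σ : 2 * σ = 2 + ε := by rw [hσdef]; ring
  -- termwise real bound
  have key : ∀ k : ℕ,
      l (k + 1) ^ 2 * Real.exp (-4 * t * l (k + 1))
          * (1 - Real.exp (-2 * t * l (k + 1))) ^ (-(2 : ℝ))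
        ≤ M ^ 2 * (2 : ℝ) ^ (-(2 + ε)) * c ^ (-ε) * t ^ (-(2 + ε))
            * (((k : ℝ) + 1) ^ q) := by
    intro k
    have hk1 : 1 ≤ k + 1 := Nat.le_add_left 1 k
    have hLpos : 0 < l (k + 1) := hl _ hk1
    have hb := term_bound σ hσ t (l (k + 1)) ht hLpos
    rw [← hMdef, h2σ] at hb
    refine hb.trans ?_
    have hL2 : l (k + 1) ^ (2 - (2 + ε)) ≤ c ^ (-ε) * ((k : ℝ) + 1) ^ q := by
      have h2σ' : 2 - (2 + ε) = -ε := by ring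
      have hlow' := hlow (k + 1) hk1
      have hck : (0 : ℝ) < c * ((k : ℝ) + 1) ^ ((2 : ℝ) / d) := by positivity
      have hmono : l (k + 1) ^ (-ε) ≤ (c * ((k : ℝ) + 1) ^ ((2 : ℝ) / d)) ^ (-ε) := by
        apply Real.rpow_le_rpow_of_nonpos hck ?_ (by linarith)
        · push_cast at hlow' ⊢; linarith
      have heqr : (c * ((k : ℝ) + 1) ^ ((2 : ℝ) / d)) ^ (-ε)
          = c ^ (-ε) * ((k : ℝ) + 1) ^ q := by
        rw [Real.mul_rpow hc.le (by positivity), ← Real.rpow_mul (by positivity), hqdef]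
      rw [h2σ', ← heqr]; exact hmono
    calc M ^ 2 * (2:ℝ) ^ (-(2+ε)) * t ^ (-(2+ε)) * l (k+1) ^ (2 - (2+ε))
        ≤ M ^ 2 * (2:ℝ) ^ (-(2+ε)) * t ^ (-(2+ε)) * (c ^ (-ε) * ((k:ℝ)+1) ^ q) := by
          apply mul_le_mul_of_nonneg_left hL2 (by positivity)
      _ = M ^ 2 * (2:ℝ) ^ (-(2+ε)) * c ^ (-ε) * t ^ (-(2+ε)) * (((k:ℝ)+1) ^ q) := by ring
  calc (∑' k : ℕ, ENNReal.ofReal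
          (l (k + 1) ^ 2 * Real.exp (-4 * t * l (k + 1))
            * (1 - Real.exp (-2 * t * l (k + 1))) ^ (-(2 : ℝ))))
      ≤ ∑' k : ℕ, ENNReal.ofReal
          (M ^ 2 * (2:ℝ) ^ (-(2+ε)) * c ^ (-ε) * t ^ (-(2+ε)) * (((k:ℝ)+1) ^ q)) :=
        ENNReal.tsum_le_tsum fun k => ENNReal.ofReal_le_ofReal (key k)
    _ = ENNReal.ofReal
          (∑' k : ℕ, M ^ 2 * (2:ℝ) ^ (-(2+ε)) * c ^ (-ε) * t ^ (-(2+ε)) * (((k:ℝ)+1) ^ q)) := by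
        rw [ENNReal.ofReal_tsum_of_nonneg (fun k => by positivity) (hg.mul_left _)]
    _ = ENNReal.ofReal (M ^ 2 * (2:ℝ) ^ (-(2+ε)) * c ^ (-ε) * S * t ^ (-(2+ε))) := by
        rw [tsum_mul_left, ← hSdef]; ring_nf
end

section
/- Let d be a positive integer, let δ ∈ [0,1), and let (λ_k)_{k≥1} be a sequence of positive reals satisfying the lower Weyl bound λ_k ≥ c·k^{2/d} for all k ≥ 1, for some constant c > 0. Then for every σ > max(0, d/2 − 2δ) there exists a constant C_σ > 0 such that for all t > 0, Σ_{k≥1} λ_k^{1−2δ} · e^{−4tλ_k} · (1 − e^{−2tλ_k})^{−1} ≤ C_σ · t^{−(1+σ)}. -/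
open scoped ENNReal

private lemma aux_exp_decay (q : ℝ) (hq : 0 < q) :
    ∃ M > 0, ∀ x : ℝ, 0 < x → Real.exp (-x) ≤ M * x ^ (-q) := by
  refine ⟨(Nat.factorial ⌈q⌉₊ : ℝ) + 1, by positivity, fun x hx => ?_⟩
  have hxq : (0:ℝ) < x ^ q := Real.rpow_pos_of_pos hx q
  rw [Real.rpow_neg hx.le, ← div_eq_mul_inv, le_div_iff₀ hxq]
  -- goal : exp (-x) * x ^ q ≤ n! + 1
  have hxn : x ^ q ≤ x ^ (⌈q⌉₊ : ℕ) + 1 := by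
    rcases le_or_gt x 1 with h1 | h1
    · have := Real.rpow_le_one hx.le h1 hq.le
      have : (0:ℝ) ≤ x ^ (⌈q⌉₊ : ℕ) := by positivity
      linarith [Real.rpow_le_one hx.le h1 hq.le]
    · have h2 : x ^ q ≤ x ^ ((⌈q⌉₊ : ℕ) : ℝ) :=
        Real.rpow_le_rpow_of_exponent_le h1.le (Nat.le_ceil q)
      rw [Real.rpow_natCast] at h2
      linarith
  have hfac : x ^ (⌈q⌉₊ : ℕ) * Real.exp (-x) ≤ (Nat.factorial ⌈q⌉₊ : ℝ) := by
    have h := Real.pow_div_factorial_le_exp x hx.le ⌈q⌉₊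
    have hfpos : (0:ℝ) < (Nat.factorial ⌈q⌉₊ : ℝ) := by positivity
    have hexp : Real.exp (-x) * Real.exp x = 1 := by
      rw [← Real.exp_add]; simp
    have h2 : x ^ (⌈q⌉₊ : ℕ) ≤ (Nat.factorial ⌈q⌉₊ : ℝ) * Real.exp x := by
      rw [div_le_iff₀ hfpos] at h; linarith [h]
    calc x ^ (⌈q⌉₊ : ℕ) * Real.exp (-x)
        ≤ ((Nat.factorial ⌈q⌉₊ : ℝ) * Real.exp x) * Real.exp (-x) := by
          apply mul_le_mul_of_nonneg_right h2 (Real.exp_nonneg _)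
      _ = (Nat.factorial ⌈q⌉₊ : ℝ) := by
          rw [mul_assoc, mul_comm (Real.exp x), hexp, mul_one]
  have hexp1 : Real.exp (-x) ≤ 1 := Real.exp_le_one_iff.mpr (by linarith)
  have hexp0 : 0 ≤ Real.exp (-x) := Real.exp_nonneg _
  nlinarith [hfac, hxn, hexp1, hexp0]

private lemma aux_inv_bound (x : ℝ) (hx : 0 < x) :
    (1 - Real.exp (-x))⁻¹ ≤ Real.exp x * x⁻¹ := by
  have hexp : Real.exp (-x) * Real.exp x = 1 := by rw [← Real.exp_add]; simp
  have h1 : x + 1 ≤ Real.exp x := Real.add_one_le_exp x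
  have hep : 0 < Real.exp (-x) := Real.exp_pos _
  have hkey : x * Real.exp (-x) ≤ 1 - Real.exp (-x) := by
    nlinarith [mul_le_mul_of_nonneg_right h1 hep.le]
  have hpos : 0 < x * Real.exp (-x) := mul_pos hx hep
  have := inv_anti₀ hpos hkey
  calc (1 - Real.exp (-x))⁻¹ ≤ (x * Real.exp (-x))⁻¹ := this
    _ = Real.exp x * x⁻¹ := by
        rw [mul_inv, Real.exp_neg, inv_inv]; ring

private lemma aux_term_bound (σ δ M t lam : ℝ) (ht : 0 < t) (hlam : 0 < lam)
    (hM0 : 0 ≤ M) (hM : ∀ x : ℝ, 0 < x → Real.exp (-x) ≤ M * x ^ (-σ)) :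
    lam ^ (1 - 2*δ) * Real.exp (-4*t*lam) * (1 - Real.exp (-2*t*lam)) ^ (-(1:ℝ))
      ≤ M * 2 ^ (-(1+σ)) * t ^ (-(1+σ)) * lam ^ (-(2*δ+σ)) := by
  set x : ℝ := 2*t*lam with hxdef
  have hx : 0 < x := by positivity
  have h2x : (-4*t*lam : ℝ) = -(2*x) + x + -x := by rw [hxdef]; ring
  have hnx : (-2*t*lam : ℝ) = -x := by rw [hxdef]; ring
  have hlp : (0:ℝ) ≤ lam ^ (1 - 2*δ) := (Real.rpow_pos_of_pos hlam _).le
  calc lam ^ (1 - 2*δ) * Real.exp (-4*t*lam) * (1 - Real.exp (-2*t*lam)) ^ (-(1:ℝ))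
      = lam ^ (1 - 2*δ) * Real.exp (-(2*x)) * (1 - Real.exp (-x))⁻¹ := by
        rw [hnx, Real.rpow_neg_one, show (-4*t*lam : ℝ) = -(2*x) by rw [hxdef]; ring]
    _ ≤ lam ^ (1 - 2*δ) * Real.exp (-(2*x)) * (Real.exp x * x⁻¹) := by
        apply mul_le_mul_of_nonneg_left (aux_inv_bound x hx) (by positivity)
    _ = lam ^ (1 - 2*δ) * Real.exp (-x) * x⁻¹ := by
        rw [show Real.exp (-x) = Real.exp (-(2*x)) * Real.exp x by
          rw [← Real.exp_add]; congr 1; ring]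
        ring
    _ ≤ lam ^ (1 - 2*δ) * (M * x ^ (-σ)) * x⁻¹ := by
        apply mul_le_mul_of_nonneg_right
          (mul_le_mul_of_nonneg_left (hM x hx) hlp) (by positivity)
    _ = M * (x ^ (-σ) * x ^ (-1:ℝ)) * lam ^ (1 - 2*δ) := by
        rw [Real.rpow_neg_one]; ring
    _ = M * x ^ (-(1+σ)) * lam ^ (1 - 2*δ) := by
        rw [← Real.rpow_add hx]; norm_num
    _ = M * (2 ^ (-(1+σ)) * t ^ (-(1+σ)) * lam ^ (-(1+σ))) * lam ^ (1 - 2*δ) := by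
        congr 2
        rw [hxdef, show (2*t*lam : ℝ) = 2*t*lam from rfl,
          Real.mul_rpow (by positivity) hlam.le,
          Real.mul_rpow (by norm_num) ht.le]
    _ = M * 2 ^ (-(1+σ)) * t ^ (-(1+σ)) * (lam ^ (-(1+σ)) * lam ^ (1 - 2*δ)) := by ring
    _ = M * 2 ^ (-(1+σ)) * t ^ (-(1+σ)) * lam ^ (-(2*δ+σ)) := by
        rw [← Real.rpow_add hlam]; ring_nf

/-- If `λ_k ≥ c k^(2/d)` for `k ≥ 1` and `δ ∈ [0,1)`, then for every
`σ > max(0, d/2 − 2δ)` there is `C_σ > 0` such that for all `t > 0`,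
`Σ_{k≥1} λ_k^(1−2δ) e^(−4tλ_k) (1 − e^(−2tλ_k))^(−1) ≤ C_σ t^(−(1+σ))`. -/
theorem hilbertSchmidt_Qt_S2t_Q_bound
    (d : ℕ) (hd : 0 < d) (δ : ℝ) (hδ0 : 0 ≤ δ) (hδ1 : δ < 1)
    (l : ℕ → ℝ) (hl : ∀ k : ℕ, 1 ≤ k → 0 < l k)
    (c : ℝ) (hc : 0 < c)
    (hlow : ∀ k : ℕ, 1 ≤ k → c * (k : ℝ) ^ ((2 : ℝ) / d) ≤ l k)
    (σ : ℝ) (hσ : max 0 ((d : ℝ) / 2 - 2 * δ) < σ) :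
    ∃ C > 0, ∀ t > 0,
      (∑' k : ℕ, ENNReal.ofReal
          (l (k + 1) ^ (1 - 2 * δ) * Real.exp (-4 * t * l (k + 1))
            * (1 - Real.exp (-2 * t * l (k + 1))) ^ (-(1 : ℝ))))
        ≤ ENNReal.ofReal (C * t ^ (-(1 + σ))) := by
  have hσ0 : 0 < σ := lt_of_le_of_lt (le_max_left _ _) hσ
  have hσd : (d:ℝ)/2 - 2*δ < σ := lt_of_le_of_lt (le_max_right _ _) hσ
  have hd' : (0:ℝ) < d := by exact_mod_cast hd
  set e : ℝ := 2*δ + σ with hedef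
  have he : 0 < e := by positivity
  set s : ℝ := 2/(d:ℝ) * e with hsdef
  have hs : 1 < s := by
    rw [hsdef]
    rw [show (2/(d:ℝ) * e) = 2*e/(d:ℝ) by ring, lt_div_iff₀ hd']
    linarith
  obtain ⟨M, hM0, hM⟩ := aux_exp_decay σ hσ0
  -- summability of the comparison series
  have hsum : Summable (fun k : ℕ => ((k:ℝ)+1) ^ (-s)) := by
    have h1 : Summable (fun n : ℕ => (n:ℝ) ^ (-s)) :=
      Real.summable_nat_rpow.mpr (by linarith)
    have h2 := (summable_nat_add_iff 1).mpr h1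
    simpa [Nat.cast_add] using h2
  set S : ℝ := ∑' k : ℕ, ((k:ℝ)+1) ^ (-s) with hSdef
  have hS1 : 0 < S :=
    Summable.tsum_pos hsum (fun i => (Real.rpow_pos_of_pos (by positivity) _).le) 0
      (Real.rpow_pos_of_pos (by positivity) _)
  set A : ℝ := M * 2 ^ (-(1+σ)) * c ^ (-e) with hAdef
  have hA : 0 < A := by positivity
  refine ⟨A * S, mul_pos hA (by linarith), fun t ht => ?_⟩
  -- pointwise bound on terms
  have hterm : ∀ k : ℕ,
      l (k + 1) ^ (1 - 2 * δ) * Real.exp (-4 * t * l (k + 1))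
        * (1 - Real.exp (-2 * t * l (k + 1))) ^ (-(1 : ℝ))
      ≤ A * t ^ (-(1+σ)) * ((k:ℝ)+1) ^ (-s) := by
    intro k
    have hk1 : 1 ≤ k + 1 := by omega
    have hlam : 0 < l (k+1) := hl (k+1) hk1
    have hbase : c * ((k:ℝ)+1) ^ ((2:ℝ)/d) ≤ l (k+1) := by
      have := hlow (k+1) hk1
      push_cast at this
      exact this
    have hbpos : 0 < c * ((k:ℝ)+1) ^ ((2:ℝ)/d) := by positivity
    have hcomp : l (k+1) ^ (-e) ≤ c ^ (-e) * ((k:ℝ)+1) ^ (-s) := by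
      have h1 : (c * ((k:ℝ)+1) ^ ((2:ℝ)/d)) ^ e ≤ l (k+1) ^ e :=
        Real.rpow_le_rpow hbpos.le hbase he.le
      have h2 : (l (k+1) ^ e)⁻¹ ≤ ((c * ((k:ℝ)+1) ^ ((2:ℝ)/d)) ^ e)⁻¹ :=
        inv_anti₀ (Real.rpow_pos_of_pos hbpos e) h1
      have h3 : (c * ((k:ℝ)+1) ^ ((2:ℝ)/d)) ^ e = c ^ e * ((k:ℝ)+1) ^ s := by
        rw [Real.mul_rpow hc.le (Real.rpow_nonneg (by positivity) _),
          ← Real.rpow_mul (by positivity)]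
      rw [Real.rpow_neg hlam.le, Real.rpow_neg hc.le, Real.rpow_neg (by positivity)]
      calc (l (k+1) ^ e)⁻¹ ≤ ((c * ((k:ℝ)+1) ^ ((2:ℝ)/d)) ^ e)⁻¹ := h2
        _ = (c ^ e)⁻¹ * (((k:ℝ)+1) ^ s)⁻¹ := by rw [h3, mul_inv]
    calc l (k + 1) ^ (1 - 2 * δ) * Real.exp (-4 * t * l (k + 1))
          * (1 - Real.exp (-2 * t * l (k + 1))) ^ (-(1 : ℝ))
        ≤ M * 2 ^ (-(1+σ)) * t ^ (-(1+σ)) * l (k+1) ^ (-e) :=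
          aux_term_bound σ δ M t (l (k+1)) ht hlam hM0.le hM
      _ ≤ M * 2 ^ (-(1+σ)) * t ^ (-(1+σ)) * (c ^ (-e) * ((k:ℝ)+1) ^ (-s)) := by
          apply mul_le_mul_of_nonneg_left hcomp (by positivity)
      _ = A * t ^ (-(1+σ)) * ((k:ℝ)+1) ^ (-s) := by rw [hAdef]; ring
  have hAt : 0 ≤ A * t ^ (-(1+σ)) := by positivity
  calc (∑' k : ℕ, ENNReal.ofReal
          (l (k + 1) ^ (1 - 2 * δ) * Real.exp (-4 * t * l (k + 1))
            * (1 - Real.exp (-2 * t * l (k + 1))) ^ (-(1 : ℝ))))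
      ≤ ∑' k : ℕ, ENNReal.ofReal (A * t ^ (-(1+σ)) * ((k:ℝ)+1) ^ (-s)) :=
        ENNReal.tsum_le_tsum (fun k => ENNReal.ofReal_le_ofReal (hterm k))
    _ = ∑' k : ℕ, ENNReal.ofReal (A * t ^ (-(1+σ))) * ENNReal.ofReal (((k:ℝ)+1) ^ (-s)) := by
        congr 1; funext k; rw [ENNReal.ofReal_mul hAt]
    _ = ENNReal.ofReal (A * t ^ (-(1+σ))) * ∑' k : ℕ, ENNReal.ofReal (((k:ℝ)+1) ^ (-s)) :=
        ENNReal.tsum_mul_left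
    _ = ENNReal.ofReal (A * t ^ (-(1+σ))) * ENNReal.ofReal S := by
        rw [hSdef, ENNReal.ofReal_tsum_of_nonneg
          (fun k => (Real.rpow_pos_of_pos (by positivity) _).le) hsum]
    _ = ENNReal.ofReal (A * S * t ^ (-(1+σ))) := by
        rw [← ENNReal.ofReal_mul hAt]; congr 1; ring
end

section
/- Let d be a positive integer and let (λ_k)_{k≥1} be a sequence of positive reals satisfying the lower Weyl bound λ_k ≥ c·k^{2/d} for all k ≥ 1, for some constant c > 0, and let δ ≥ 0 with δ > d/4 − 1/2. Define F(t) := Σ_{k≥1} λ_k² e^{−4tλ_k} (1 − e^{−2tλ_k})^{−2} and G(t) := Σ_{k≥1} λ_k^{1−2δ} e^{−4tλ_k} (1 − e^{−2tλ_k})^{−1} for t > 0. Then there exists ϑ ∈ (0,1) such that for every λ > 0, ∫_0^∞ e^{−λt} · F(t)^{(1−ϑ)/2} · G(t)^{ϑ/2} dt < ∞. -/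
open MeasureTheory
open scoped ENNReal

set_option maxHeartbeats 1000000

lemma aux_exp_neg_le (m s : ℝ) (hm : 0 < m) (hs : 0 < s) :
    Real.exp (-s) ≤ m ^ m * Real.exp (-m) * s ^ (-m) := by
  rw [Real.rpow_def_of_pos hm, Real.rpow_def_of_pos hs, ← Real.exp_add, ← Real.exp_add]
  apply Real.exp_le_exp.2
  have h := Real.log_le_sub_one_of_pos (div_pos hs hm)
  rw [Real.log_div hs.ne' hm.ne'] at h
  have h2 : m * (Real.log s - Real.log m) ≤ m * (s / m - 1) :=
    mul_le_mul_of_nonneg_left h hm.le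
  have h3 : m * (s / m - 1) = s - m := by field_simp
  nlinarith [h2, h3]

lemma aux_one_sub_exp (s : ℝ) (hs : 0 < s) : s * Real.exp (-s) ≤ 1 - Real.exp (-s) := by
  have h := Real.add_one_le_exp s
  have he : Real.exp (-s) * Real.exp s = 1 := by rw [← Real.exp_add]; simp
  nlinarith [Real.exp_pos (-s)]

lemma aux_core_F (s : ℝ) (hs : 0 < s) :
    s ^ 2 / 2 * Real.exp (-s) ^ 2 ≤ Real.exp (-(s / 2)) * (1 - Real.exp (-s)) ^ 2 := by
  set u := Real.exp (-(s / 2)) with hu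
  have hu0 : 0 < u := Real.exp_pos _
  have hE : Real.exp (-s) = u ^ 2 := by rw [hu, sq, ← Real.exp_add]; ring_nf
  have f1 : s * u ^ 2 ≤ 1 - u ^ 2 := by rw [← hE]; exact aux_one_sub_exp s hs
  have f2 : s / 2 * u ≤ 1 - u := aux_one_sub_exp (s / 2) (by linarith)
  have hu1 : u ≤ 1 := by nlinarith
  have h1 : 0 ≤ 1 - u ^ 2 := by nlinarith
  have key : (s * u ^ 2) * (s / 2 * u) ≤ (1 - u ^ 2) * (1 - u) :=
    mul_le_mul f1 f2 (by positivity) h1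
  rw [hE]
  nlinarith [mul_le_mul_of_nonneg_left key hu0.le,
    mul_nonneg (mul_nonneg hu0.le h1) (mul_nonneg hu0.le (by nlinarith : (0:ℝ) ≤ 1 - u))]

lemma term_F_le (t x : ℝ) (ht : 0 < t) (hx : 0 < x) :
    x ^ 2 * Real.exp (-4 * t * x) * (1 - Real.exp (-2 * t * x)) ^ (-(2 : ℝ))
      ≤ Real.exp (-(t * x)) / (2 * t ^ 2) := by
  have hs : 0 < 2 * t * x := by positivity
  have hE1 : Real.exp (-(2 * t * x)) < 1 := Real.exp_lt_one_iff.2 (by linarith)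
  have h1 : 0 < 1 - Real.exp (-(2 * t * x)) := by linarith
  have e1 : (-2 : ℝ) * t * x = -(2 * t * x) := by ring
  have e2 : Real.exp (-4 * t * x) = Real.exp (-(2 * t * x)) ^ 2 := by
    rw [sq, ← Real.exp_add]; ring_nf
  rw [e1, e2, Real.rpow_neg h1.le, Real.rpow_two]
  rw [mul_inv_le_iff₀ (by positivity), div_mul_eq_mul_div, le_div_iff₀ (by positivity)]
  have hc := aux_core_F (2 * t * x) hs
  rw [show -(2 * t * x / 2) = -(t * x) by ring] at hc
  nlinarith [hc]

lemma term_G_le (t x δ : ℝ) (ht : 0 < t) (hx : 0 < x) :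
    x ^ (1 - 2 * δ) * Real.exp (-4 * t * x) * (1 - Real.exp (-2 * t * x)) ^ (-(1 : ℝ))
      ≤ x ^ (-(2 * δ)) * Real.exp (-(2 * t * x)) / (2 * t) := by
  have hs : 0 < 2 * t * x := by positivity
  have hE1 : Real.exp (-(2 * t * x)) < 1 := Real.exp_lt_one_iff.2 (by linarith)
  have h1 : 0 < 1 - Real.exp (-(2 * t * x)) := by linarith
  have e1 : (-2 : ℝ) * t * x = -(2 * t * x) := by ring
  have e2 : Real.exp (-4 * t * x) = Real.exp (-(2 * t * x)) ^ 2 := by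
    rw [sq, ← Real.exp_add]; ring_nf
  have e3 : x ^ (1 - 2 * δ) = x ^ (-(2 * δ)) * x := by
    rw [show (1 - 2 * δ) = -(2 * δ) + 1 by ring, Real.rpow_add hx, Real.rpow_one]
  rw [e1, e2, e3, Real.rpow_neg_one]
  rw [mul_inv_le_iff₀ h1, div_mul_eq_mul_div, le_div_iff₀ (by positivity)]
  have f1 := aux_one_sub_exp (2 * t * x) hs
  have hP : (0:ℝ) < x ^ (-(2 * δ)) := Real.rpow_pos_of_pos hx _
  nlinarith [mul_le_mul_of_nonneg_left (mul_le_mul_of_nonneg_left f1 (Real.exp_pos (-(2*t*x))).le) hP.le]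

lemma bound_F (d : ℕ) (hd : 0 < d) (c t x : ℝ) (k : ℕ) (hc : 0 < c) (ht : 0 < t)
    (hx0 : 0 < x) (hx : c * ((k : ℝ) + 1) ^ ((2 : ℝ) / d) ≤ x) :
    x ^ 2 * Real.exp (-4 * t * x) * (1 - Real.exp (-2 * t * x)) ^ (-(2 : ℝ))
      ≤ ((d : ℝ) ^ (d : ℝ) * Real.exp (-(d : ℝ)) * c ^ (-(d : ℝ)) / 2)
          * t ^ (-((d : ℝ) + 2)) * ((k : ℝ) + 1) ^ (-(2 : ℝ)) := by
  have hd' : (0 : ℝ) < d := by exact_mod_cast hd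
  have hk1 : (0 : ℝ) < (k : ℝ) + 1 := by positivity
  have hκ : (0 : ℝ) < c * ((k : ℝ) + 1) ^ ((2 : ℝ) / d) := by positivity
  calc x ^ 2 * Real.exp (-4 * t * x) * (1 - Real.exp (-2 * t * x)) ^ (-(2 : ℝ))
      ≤ Real.exp (-(t * x)) / (2 * t ^ 2) := term_F_le t x ht hx0
    _ ≤ ((d : ℝ) ^ (d : ℝ) * Real.exp (-(d : ℝ))
          * (t * (c * ((k : ℝ) + 1) ^ ((2 : ℝ) / d))) ^ (-(d : ℝ))) / (2 * t ^ 2) := by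
        gcongr
        calc Real.exp (-(t * x)) ≤ Real.exp (-(t * (c * ((k : ℝ) + 1) ^ ((2 : ℝ) / d)))) := by
              apply Real.exp_le_exp.2
              have := mul_le_mul_of_nonneg_left hx ht.le
              linarith
          _ ≤ _ := aux_exp_neg_le (d : ℝ) _ hd' (by positivity)
    _ = ((d : ℝ) ^ (d : ℝ) * Real.exp (-(d : ℝ)) * c ^ (-(d : ℝ)) / 2)
          * t ^ (-((d : ℝ) + 2)) * ((k : ℝ) + 1) ^ (-(2 : ℝ)) := by
        have e1 : (t * (c * ((k : ℝ) + 1) ^ ((2 : ℝ) / d))) ^ (-(d : ℝ))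
            = t ^ (-(d : ℝ)) * (c ^ (-(d : ℝ)) * ((k : ℝ) + 1) ^ (-(2 : ℝ))) := by
          rw [Real.mul_rpow ht.le hκ.le, Real.mul_rpow hc.le (Real.rpow_nonneg hk1.le _),
            ← Real.rpow_mul hk1.le, show (2 : ℝ) / d * -(d : ℝ) = -(2:ℝ) by field_simp]
        have e2 : t ^ (-((d : ℝ) + 2)) = t ^ (-(d : ℝ)) * (t ^ 2)⁻¹ := by
          rw [show -((d : ℝ) + 2) = -(d : ℝ) + -(2:ℝ) by ring, Real.rpow_add ht]
          congr 1
          rw [Real.rpow_neg ht.le, Real.rpow_two]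
        rw [e1, e2]; ring

lemma bound_G (d : ℕ) (hd : 0 < d) (c t x δ m : ℝ) (k : ℕ) (hc : 0 < c) (ht : 0 < t)
    (hδ0 : 0 ≤ δ) (hm : 0 < m) (hx0 : 0 < x) (hx : c * ((k : ℝ) + 1) ^ ((2 : ℝ) / d) ≤ x) :
    x ^ (1 - 2 * δ) * Real.exp (-4 * t * x) * (1 - Real.exp (-2 * t * x)) ^ (-(1 : ℝ))
      ≤ (c ^ (-(2 * δ)) * (m ^ m * Real.exp (-m) * (2 * c) ^ (-m)) / 2)
          * t ^ (-(1 + m)) * ((k : ℝ) + 1) ^ (-((2 : ℝ) / d * (2 * δ + m))) := by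
  have hd' : (0 : ℝ) < d := by exact_mod_cast hd
  have hk1 : (0 : ℝ) < (k : ℝ) + 1 := by positivity
  have hκ : (0 : ℝ) < c * ((k : ℝ) + 1) ^ ((2 : ℝ) / d) := by positivity
  set κ := c * ((k : ℝ) + 1) ^ ((2 : ℝ) / d) with hκdef
  calc x ^ (1 - 2 * δ) * Real.exp (-4 * t * x) * (1 - Real.exp (-2 * t * x)) ^ (-(1 : ℝ))
      ≤ x ^ (-(2 * δ)) * Real.exp (-(2 * t * x)) / (2 * t) := term_G_le t x δ ht hx0
    _ ≤ (κ ^ (-(2 * δ)) * (m ^ m * Real.exp (-m) * (2 * t * κ) ^ (-m))) / (2 * t) := by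
        apply div_le_div_of_nonneg_right ?_ (by positivity)
        apply mul_le_mul
        · exact Real.rpow_le_rpow_of_nonpos hκ hx (by linarith)
        · calc Real.exp (-(2 * t * x)) ≤ Real.exp (-(2 * t * κ)) := by
                apply Real.exp_le_exp.2
                have := mul_le_mul_of_nonneg_left hx (by positivity : (0:ℝ) ≤ 2 * t)
                linarith
            _ ≤ _ := aux_exp_neg_le m _ hm (by positivity)
        · positivity
        · positivity
    _ = (c ^ (-(2 * δ)) * (m ^ m * Real.exp (-m) * (2 * c) ^ (-m)) / 2)
          * t ^ (-(1 + m)) * ((k : ℝ) + 1) ^ (-((2 : ℝ) / d * (2 * δ + m))) := by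
        have e1 : κ ^ (-(2 * δ))
            = c ^ (-(2 * δ)) * ((k : ℝ) + 1) ^ ((2 : ℝ) / d * -(2 * δ)) := by
          rw [hκdef, Real.mul_rpow hc.le (Real.rpow_nonneg hk1.le _),
            ← Real.rpow_mul hk1.le]
        have e2 : (2 * t * κ) ^ (-m)
            = 2 ^ (-m) * t ^ (-m) * (c ^ (-m) * ((k : ℝ) + 1) ^ ((2 : ℝ) / d * -m)) := by
          rw [hκdef, Real.mul_rpow (by positivity) hκ.le,
            Real.mul_rpow (by norm_num) ht.le,
            Real.mul_rpow hc.le (Real.rpow_nonneg hk1.le _), ← Real.rpow_mul hk1.le]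
        have e3 : (2 * c) ^ (-m) = 2 ^ (-m) * c ^ (-m) :=
          Real.mul_rpow (by norm_num) hc.le
        have e4 : t ^ (-(1 + m)) = t⁻¹ * t ^ (-m) := by
          rw [show -(1 + m) = -1 + -m by ring, Real.rpow_add ht, Real.rpow_neg_one]
        have e5 : ((k : ℝ) + 1) ^ (-((2 : ℝ) / d * (2 * δ + m)))
            = ((k : ℝ) + 1) ^ ((2 : ℝ) / d * -(2 * δ)) * ((k : ℝ) + 1) ^ ((2 : ℝ) / d * -m) := by
          rw [show -((2 : ℝ) / d * (2 * δ + m)) = (2 : ℝ) / d * -(2 * δ) + (2 : ℝ) / d * -m by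
            ring, Real.rpow_add hk1]
        rw [e1, e2, e3, e4, e5]; ring

lemma integral_fin (lam γ : ℝ) (hlam : 0 < lam) (hγ0 : 0 < γ) (hγ1 : γ < 1) :
    ∫⁻ t in Set.Ioi (0 : ℝ), ENNReal.ofReal (Real.exp (-lam * t) * t ^ (-γ)) < ⊤ := by
  set f : ℝ → ℝ := fun t => Real.exp (-lam * t) * t ^ (-γ) with hf
  have hmeas : Measurable f := by
    apply Measurable.mul
    · exact (measurable_id.const_mul (-lam)).exp
    · measurability
  have h1 : IntegrableOn f (Set.Ioc 0 1) := by
    have hg : IntegrableOn (fun t : ℝ => t ^ (-γ)) (Set.Ioc (0 : ℝ) 1) :=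
      (intervalIntegral.intervalIntegrable_rpow' (by linarith)).1
    apply hg.integrable.mono' hmeas.aestronglyMeasurable
    rw [ae_restrict_iff' measurableSet_Ioc]
    filter_upwards with t ht
    have ht0 : 0 < t := ht.1
    have hr : (0 : ℝ) ≤ t ^ (-γ) := Real.rpow_nonneg ht0.le _
    have he : Real.exp (-lam * t) ≤ 1 := Real.exp_le_one_iff.2 (by nlinarith)
    rw [hf]
    simp only [Real.norm_eq_abs, abs_mul]
    rw [abs_of_nonneg (Real.exp_pos _).le, abs_of_nonneg hr]
    nlinarith [Real.exp_pos (-lam * t)]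
  have h2 : IntegrableOn f (Set.Ioi 1) := by
    apply (exp_neg_integrableOn_Ioi 1 hlam).mono' hmeas.aestronglyMeasurable
    rw [ae_restrict_iff' measurableSet_Ioi]
    filter_upwards with t ht
    have ht1 : (1 : ℝ) ≤ t := le_of_lt ht
    have hr : t ^ (-γ) ≤ 1 := Real.rpow_le_one_of_one_le_of_nonpos ht1 (by linarith)
    have hr0 : (0 : ℝ) ≤ t ^ (-γ) := Real.rpow_nonneg (by linarith) _
    rw [hf]
    simp only [Real.norm_eq_abs, abs_mul]
    rw [abs_of_nonneg (Real.exp_pos _).le, abs_of_nonneg hr0]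
    nlinarith [Real.exp_pos (-lam * t)]
  have h3 : IntegrableOn f (Set.Ioi 0) := by
    rw [← Set.Ioc_union_Ioi_eq_Ioi (zero_le_one : (0:ℝ) ≤ 1)]
    exact h1.union h2
  have hnn : 0 ≤ᵐ[volume.restrict (Set.Ioi (0:ℝ))] f := by
    rw [Filter.EventuallyLE, ae_restrict_iff' measurableSet_Ioi]
    filter_upwards with t ht
    simp only [Pi.zero_apply, hf]
    have : (0:ℝ) < t := ht
    positivity
  exact (hasFiniteIntegral_iff_ofReal hnn).1 h3.2


lemma summable_shift (q : ℝ) (hq : 1 < q) :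
    Summable (fun k : ℕ => ((k : ℝ) + 1) ^ (-q)) := by
  have h : Summable (fun n : ℕ => (n : ℝ) ^ (-q)) :=
    Real.summable_nat_rpow.2 (by linarith)
  have h2 := h.comp_injective (add_left_injective 1)
  refine h2.congr fun k => ?_
  simp [Function.comp]

/-- If `λ_k ≥ c k^(2/d)` for `k ≥ 1` and `δ ≥ 0` with `δ > d/4 − 1/2`, then with
`F(t) = Σ_{k≥1} λ_k² e^(−4tλ_k)(1−e^(−2tλ_k))^(−2)` and
`G(t) = Σ_{k≥1} λ_k^(1−2δ) e^(−4tλ_k)(1−e^(−2tλ_k))^(−1)`, there is `ϑ ∈ (0,1)` such that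
for every `λ > 0`, `∫_0^∞ e^(−λt) F(t)^((1−ϑ)/2) G(t)^(ϑ/2) dt < ∞`. -/
theorem kolmogorov_trace_interpolation_integrable
    (d : ℕ) (hd : 0 < d) (l : ℕ → ℝ) (hl : ∀ k : ℕ, 1 ≤ k → 0 < l k)
    (c : ℝ) (hc : 0 < c)
    (hlow : ∀ k : ℕ, 1 ≤ k → c * (k : ℝ) ^ ((2 : ℝ) / d) ≤ l k)
    (δ : ℝ) (hδ0 : 0 ≤ δ) (hδ : (d : ℝ) / 4 - 1 / 2 < δ)
    (F G : ℝ → ℝ≥0∞)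
    (hF : ∀ t, F t = ∑' k : ℕ, ENNReal.ofReal
      (l (k + 1) ^ 2 * Real.exp (-4 * t * l (k + 1))
        * (1 - Real.exp (-2 * t * l (k + 1))) ^ (-(2 : ℝ))))
    (hG : ∀ t, G t = ∑' k : ℕ, ENNReal.ofReal
      (l (k + 1) ^ (1 - 2 * δ) * Real.exp (-4 * t * l (k + 1))
        * (1 - Real.exp (-2 * t * l (k + 1))) ^ (-(1 : ℝ)))) :
    ∃ ϑ : ℝ, 0 < ϑ ∧ ϑ < 1 ∧ ∀ lam > 0,
      ∫⁻ t in Set.Ioi (0 : ℝ),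
          ENNReal.ofReal (Real.exp (-lam * t)) * F t ^ ((1 - ϑ) / 2) * G t ^ (ϑ / 2)
        < ⊤ := by
  have hd' : (0 : ℝ) < d := by exact_mod_cast hd
  set μ0 : ℝ := max ((d : ℝ) / 2 - 2 * δ) 0 with hμ0def
  have hμ0nn : 0 ≤ μ0 := le_max_right _ _
  have hμ0lt : μ0 < 1 := max_lt (by linarith) one_pos
  set m : ℝ := (μ0 + 1) / 2 with hmdef
  have hm0 : 0 < m := by rw [hmdef]; linarith
  have hm1 : m < 1 := by rw [hmdef]; linarith
  have hmgt : (d : ℝ) / 2 - 2 * δ < m := by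
    have h1 : (d : ℝ) / 2 - 2 * δ ≤ μ0 := le_max_left _ _
    rw [hmdef]; linarith
  set ϑ : ℝ := 1 - (1 - m) / (2 * ((d : ℝ) + 2)) with hθdef
  have hden : (0 : ℝ) < 2 * ((d : ℝ) + 2) := by positivity
  have hε0 : 0 < (1 - m) / (2 * ((d : ℝ) + 2)) := div_pos (by linarith) hden
  have hε1 : (1 - m) / (2 * ((d : ℝ) + 2)) < 1 := by
    rw [div_lt_one hden]; nlinarith
  have hθ1 : ϑ < 1 := by rw [hθdef]; linarith
  have hθ0 : 0 < ϑ := by rw [hθdef]; linarith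
  refine ⟨ϑ, hθ0, hθ1, ?_⟩
  intro lam hlam
  set p : ℝ := (1 - ϑ) / 2 with hpdef
  set r : ℝ := ϑ / 2 with hrdef
  have hp0 : 0 < p := by rw [hpdef]; linarith
  have hr0 : 0 < r := by rw [hrdef]; linarith
  set A : ℝ := (d : ℝ) + 2 with hAdef
  set B : ℝ := 1 + m with hBdef
  set γ : ℝ := A * p + B * r with hγdef
  have hAp : A * p = (1 - m) / 4 := by
    rw [hpdef, hθdef, hAdef]; field_simp; ring
  have hγ1 : γ < 1 := by
    have h1 : B * r ≤ B / 2 := by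
      have : r ≤ 1 / 2 := by rw [hrdef]; linarith
      nlinarith [show (0:ℝ) < B by rw [hBdef]; linarith]
    rw [hγdef, hAp, hBdef] at *
    nlinarith
  have hγ0 : 0 < γ := by
    have : 0 < A := by rw [hAdef]; linarith
    have : 0 < B := by rw [hBdef]; linarith
    rw [hγdef]; positivity
  set CF : ℝ := (d : ℝ) ^ (d : ℝ) * Real.exp (-(d : ℝ)) * c ^ (-(d : ℝ)) / 2 with hCFdef
  have hCF : 0 < CF := by rw [hCFdef]; positivity
  set CG : ℝ := c ^ (-(2 * δ)) * (m ^ m * Real.exp (-m) * (2 * c) ^ (-m)) / 2 with hCGdef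
  have hCG : 0 < CG := by rw [hCGdef]; positivity
  set q : ℝ := (2 : ℝ) / d * (2 * δ + m) with hqdef
  have hq : 1 < q := by
    rw [hqdef, div_mul_eq_mul_div, lt_div_iff₀ hd']
    linarith
  set SF : ℝ≥0∞ := ∑' k : ℕ, ENNReal.ofReal (((k : ℝ) + 1) ^ (-(2 : ℝ))) with hSFdef
  set SG : ℝ≥0∞ := ∑' k : ℕ, ENNReal.ofReal (((k : ℝ) + 1) ^ (-q)) with hSGdef
  have hSF : SF ≠ ⊤ := by
    rw [hSFdef, ← ENNReal.ofReal_tsum_of_nonneg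
      (fun k => Real.rpow_nonneg (by positivity) _) (summable_shift 2 one_lt_two)]
    exact ENNReal.ofReal_ne_top
  have hSG : SG ≠ ⊤ := by
    rw [hSGdef, ← ENNReal.ofReal_tsum_of_nonneg
      (fun k => Real.rpow_nonneg (by positivity) _) (summable_shift q hq)]
    exact ENNReal.ofReal_ne_top
  have hFb : ∀ t : ℝ, 0 < t → F t ≤ ENNReal.ofReal (CF * t ^ (-A)) * SF := by
    intro t ht
    rw [hF t]
    calc (∑' k : ℕ, ENNReal.ofReal
        (l (k + 1) ^ 2 * Real.exp (-4 * t * l (k + 1))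
          * (1 - Real.exp (-2 * t * l (k + 1))) ^ (-(2 : ℝ))))
        ≤ ∑' k : ℕ, ENNReal.ofReal (CF * t ^ (-A) * (((k : ℝ) + 1) ^ (-(2 : ℝ)))) := by
          apply ENNReal.tsum_le_tsum
          intro k
          apply ENNReal.ofReal_le_ofReal
          have h1 : (0 : ℝ) < l (k + 1) := hl (k + 1) (by omega)
          have h2 := hlow (k + 1) (by omega)
          push_cast at h2
          have := bound_F d hd c t (l (k + 1)) k hc ht h1 h2
          rw [hCFdef, hAdef]
          exact this
      _ = ENNReal.ofReal (CF * t ^ (-A)) * SF := by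
          rw [hSFdef, ← ENNReal.tsum_mul_left]
          apply tsum_congr
          intro k
          rw [← ENNReal.ofReal_mul (by positivity)]
  have hGb : ∀ t : ℝ, 0 < t → G t ≤ ENNReal.ofReal (CG * t ^ (-B)) * SG := by
    intro t ht
    rw [hG t]
    calc (∑' k : ℕ, ENNReal.ofReal
        (l (k + 1) ^ (1 - 2 * δ) * Real.exp (-4 * t * l (k + 1))
          * (1 - Real.exp (-2 * t * l (k + 1))) ^ (-(1 : ℝ))))
        ≤ ∑' k : ℕ, ENNReal.ofReal (CG * t ^ (-B) * (((k : ℝ) + 1) ^ (-q))) := by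
          apply ENNReal.tsum_le_tsum
          intro k
          apply ENNReal.ofReal_le_ofReal
          have h1 : (0 : ℝ) < l (k + 1) := hl (k + 1) (by omega)
          have h2 := hlow (k + 1) (by omega)
          push_cast at h2
          have := bound_G d hd c t (l (k + 1)) δ m k hc ht hδ0 hm0 h1 h2
          rw [hCGdef, hBdef, hqdef]
          exact this
      _ = ENNReal.ofReal (CG * t ^ (-B)) * SG := by
          rw [hSGdef, ← ENNReal.tsum_mul_left]
          apply tsum_congr
          intro k
          rw [← ENNReal.ofReal_mul (by positivity)]
  set K : ℝ≥0∞ := ENNReal.ofReal (CF ^ p * CG ^ r) * (SF ^ p * SG ^ r) with hKdef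
  have hK : K ≠ ⊤ := by
    rw [hKdef]
    exact ENNReal.mul_ne_top ENNReal.ofReal_ne_top
      (ENNReal.mul_ne_top (ENNReal.rpow_ne_top_of_nonneg hp0.le hSF)
        (ENNReal.rpow_ne_top_of_nonneg hr0.le hSG))
  have key : ∀ t : ℝ, t ∈ Set.Ioi (0 : ℝ) →
      ENNReal.ofReal (Real.exp (-lam * t)) * F t ^ ((1 - ϑ) / 2) * G t ^ (ϑ / 2)
        ≤ K * ENNReal.ofReal (Real.exp (-lam * t) * t ^ (-γ)) := by
    intro t ht
    have ht : (0 : ℝ) < t := ht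
    have h1 : F t ^ p ≤ (ENNReal.ofReal (CF * t ^ (-A)) * SF) ^ p :=
      ENNReal.rpow_le_rpow (hFb t ht) hp0.le
    have h2 : G t ^ r ≤ (ENNReal.ofReal (CG * t ^ (-B)) * SG) ^ r :=
      ENNReal.rpow_le_rpow (hGb t ht) hr0.le
    calc ENNReal.ofReal (Real.exp (-lam * t)) * F t ^ ((1 - ϑ) / 2) * G t ^ (ϑ / 2)
        = ENNReal.ofReal (Real.exp (-lam * t)) * F t ^ p * G t ^ r := by
          rw [hpdef, hrdef]
      _ ≤ ENNReal.ofReal (Real.exp (-lam * t))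
            * (ENNReal.ofReal (CF * t ^ (-A)) * SF) ^ p
            * (ENNReal.ofReal (CG * t ^ (-B)) * SG) ^ r :=
          mul_le_mul' (mul_le_mul' le_rfl h1) h2
      _ = K * ENNReal.ofReal (Real.exp (-lam * t) * t ^ (-γ)) := by
          rw [ENNReal.mul_rpow_of_nonneg _ _ hp0.le, ENNReal.mul_rpow_of_nonneg _ _ hr0.le,
            ENNReal.ofReal_rpow_of_nonneg (by positivity) hp0.le,
            ENNReal.ofReal_rpow_of_nonneg (by positivity) hr0.le,
            Real.mul_rpow hCF.le (Real.rpow_nonneg ht.le _),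
            Real.mul_rpow hCG.le (Real.rpow_nonneg ht.le _),
            ← Real.rpow_mul ht.le, ← Real.rpow_mul ht.le]
          have m1 : ENNReal.ofReal (Real.exp (-lam * t))
              * ENNReal.ofReal (CF ^ p * t ^ (-A * p))
              * ENNReal.ofReal (CG ^ r * t ^ (-B * r))
              = ENNReal.ofReal (CF ^ p * CG ^ r)
                  * ENNReal.ofReal (Real.exp (-lam * t) * t ^ (-γ)) := by
            rw [← ENNReal.ofReal_mul (Real.exp_pos _).le, ← ENNReal.ofReal_mul (by positivity),
              ← ENNReal.ofReal_mul (by positivity)]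
            congr 1
            have ht2 : t ^ (-A * p) * t ^ (-B * r) = t ^ (-γ) := by
              rw [← Real.rpow_add ht]
              congr 1
              rw [hγdef]; ring
            rw [← ht2]; ring
          calc ENNReal.ofReal (Real.exp (-lam * t))
              * (ENNReal.ofReal (CF ^ p * t ^ (-A * p)) * SF ^ p)
              * (ENNReal.ofReal (CG ^ r * t ^ (-B * r)) * SG ^ r)
              = (ENNReal.ofReal (Real.exp (-lam * t))
                  * ENNReal.ofReal (CF ^ p * t ^ (-A * p))
                  * ENNReal.ofReal (CG ^ r * t ^ (-B * r))) * (SF ^ p * SG ^ r) := by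
                ring
            _ = K * ENNReal.ofReal (Real.exp (-lam * t) * t ^ (-γ)) := by
                rw [m1, hKdef]; ring
  calc ∫⁻ t in Set.Ioi (0 : ℝ),
        ENNReal.ofReal (Real.exp (-lam * t)) * F t ^ ((1 - ϑ) / 2) * G t ^ (ϑ / 2)
      ≤ ∫⁻ t in Set.Ioi (0 : ℝ), K * ENNReal.ofReal (Real.exp (-lam * t) * t ^ (-γ)) :=
        setLIntegral_mono' measurableSet_Ioi key
    _ = K * ∫⁻ t in Set.Ioi (0 : ℝ), ENNReal.ofReal (Real.exp (-lam * t) * t ^ (-γ)) :=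
        lintegral_const_mul' K _ hK
    _ < ⊤ := ENNReal.mul_lt_top hK.lt_top (integral_fin lam γ hlam hγ0 hγ1)
end

section
/- Let (λ_k)_{k≥1} be strictly positive reals and δ > 0 with Σ_{k≥1} λ_k^{−2δ} < ∞, and let (w_k)_{k≥1} be nonnegative reals with Σ_{k≥1} w_k < ∞. Define F(t) := Σ_{k≥1} λ_k² e^{−4tλ_k} (1 − e^{−2tλ_k})^{−2} and G_w(t) := Σ_{k≥1} λ_k e^{−4tλ_k} (1 − e^{−2tλ_k})^{−1} w_k for t > 0. Then for every ϑ ∈ (2δ/(2δ+1), 1) and every λ > 0, ∫_0^∞ e^{−λt} · F(t)^{(1−ϑ)/2} · G_w(t)^{ϑ/2} dt < ∞. -/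
open MeasureTheory
open scoped ENNReal

open Set

section HSAux

lemma aux_core {x : ℝ} (hx : 0 < x) : x * Real.exp (-x) ≤ 1 - Real.exp (-x) := by
  have h := Real.add_one_le_exp x
  have he : 0 < Real.exp (-x) := Real.exp_pos _
  have hmul : (x + 1) * Real.exp (-x) ≤ Real.exp x * Real.exp (-x) :=
    mul_le_mul_of_nonneg_right h he.le
  rw [← Real.exp_add, add_neg_cancel, Real.exp_zero] at hmul
  nlinarith

lemma aux_pos {x : ℝ} (hx : 0 < x) : 0 < 1 - Real.exp (-x) := by
  have : Real.exp (-x) < 1 := Real.exp_lt_one_iff.mpr (by linarith)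
  linarith

lemma aux1 {x : ℝ} (hx : 0 < x) : (1 - Real.exp (-x))⁻¹ * Real.exp (-x) ≤ x⁻¹ := by
  have h1 := aux_pos hx
  rw [inv_mul_le_iff₀ h1, ← div_eq_mul_inv, le_div_iff₀ hx]
  linarith [aux_core hx, mul_comm x (Real.exp (-x))]

lemma aux2 {x : ℝ} (hx : 0 < x) : (1 - Real.exp (-x))⁻¹ ≤ x⁻¹ + 1 := by
  have h1 := aux_pos hx
  have hc := aux_core hx
  rw [inv_eq_one_div, div_le_iff₀ h1]
  have h2 : x⁻¹ * (x * Real.exp (-x)) ≤ x⁻¹ * (1 - Real.exp (-x)) :=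
    mul_le_mul_of_nonneg_left hc (inv_pos.mpr hx).le
  have h3 : x⁻¹ * (x * Real.exp (-x)) = Real.exp (-x) := by
    field_simp
  nlinarith

lemma rpow_exp_le (p : ℝ) (hp : 0 ≤ p) {y : ℝ} (hy : 0 < y) :
    y ^ p * Real.exp (-y) ≤ (Nat.factorial (Nat.ceil p) : ℝ) := by
  have hfac : (1 : ℝ) ≤ (Nat.factorial (Nat.ceil p) : ℝ) := by
    exact_mod_cast Nat.one_le_iff_ne_zero.mpr (Nat.factorial_ne_zero _)
  rcases le_or_gt y 1 with h1 | h1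
  · have hyp : y ^ p ≤ 1 := Real.rpow_le_one hy.le h1 hp
    have he : Real.exp (-y) ≤ 1 := Real.exp_le_one_iff.mpr (by linarith)
    nlinarith [Real.rpow_nonneg hy.le p, Real.exp_pos (-y)]
  · have h2 : y ^ p ≤ y ^ (Nat.ceil p : ℝ) :=
      Real.rpow_le_rpow_of_exponent_le h1.le (Nat.le_ceil p)
    have h3 : y ^ (Nat.ceil p : ℝ) = y ^ (Nat.ceil p) := Real.rpow_natCast y _
    have h4 : y ^ (Nat.ceil p) ≤ (Nat.factorial (Nat.ceil p) : ℝ) * Real.exp y := by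
      have := Real.pow_div_factorial_le_exp y hy.le (Nat.ceil p)
      have hf : (0:ℝ) < (Nat.factorial (Nat.ceil p) : ℝ) := by positivity
      calc y ^ (Nat.ceil p) = y ^ (Nat.ceil p) / (Nat.factorial (Nat.ceil p) : ℝ) * (Nat.factorial (Nat.ceil p) : ℝ) := by
            field_simp
        _ ≤ Real.exp y * (Nat.factorial (Nat.ceil p) : ℝ) := by gcongr
        _ = _ := mul_comm _ _
    calc y ^ p * Real.exp (-y) ≤ (Nat.factorial (Nat.ceil p) : ℝ) * Real.exp y * Real.exp (-y) := by
          rw [h3] at h2; exact mul_le_mul_of_nonneg_right (h2.trans h4) (Real.exp_pos _).le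
      _ = (Nat.factorial (Nat.ceil p) : ℝ) := by rw [mul_assoc, ← Real.exp_add, add_neg_cancel, Real.exp_zero, mul_one]

lemma key_sup (δ : ℝ) (hδ : 0 < δ) {y : ℝ} (hy : 0 < y) :
    y ^ (2*δ) * ((1/2 + y)^2 * Real.exp (-(4*y))) ≤ 3 * (Nat.factorial (Nat.ceil (2*δ+2)) : ℝ) := by
  set N := Nat.ceil (2*δ+2) with hN
  have hNf : ∀ q : ℝ, 0 ≤ q → q ≤ 2*δ+2 → y ^ q * Real.exp (-y) ≤ (Nat.factorial N : ℝ) := by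
    intro q hq hq2
    refine (rpow_exp_le q hq hy).trans ?_
    exact_mod_cast Nat.factorial_le (Nat.ceil_le_ceil hq2)
  have he : Real.exp (-(4*y)) ≤ Real.exp (-y) := Real.exp_le_exp.mpr (by linarith)
  have hsq : (1/2 + y)^2 ≤ 1 + y + y^2 := by nlinarith
  have h0 : y ^ (2*δ) * Real.exp (-y) ≤ (Nat.factorial N : ℝ) := hNf _ (by linarith) (by linarith)
  have h1 : y ^ (2*δ+1) * Real.exp (-y) ≤ (Nat.factorial N : ℝ) := hNf _ (by linarith) (by linarith)
  have h2 : y ^ (2*δ+2) * Real.exp (-y) ≤ (Nat.factorial N : ℝ) := hNf _ (by linarith) (by linarith)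
  have e1 : y ^ (2*δ+1) = y ^ (2*δ) * y := by
    rw [Real.rpow_add hy, Real.rpow_one]
  have e2 : y ^ (2*δ+2) = y ^ (2*δ) * y^2 := by
    rw [Real.rpow_add hy, Real.rpow_two]
  have hyp : (0:ℝ) < y ^ (2*δ) := Real.rpow_pos_of_pos hy _
  have hee : 0 < Real.exp (-y) := Real.exp_pos _
  have hchain : y ^ (2*δ) * ((1/2 + y)^2 * Real.exp (-(4*y)))
      ≤ y ^ (2*δ) * ((1 + y + y^2) * Real.exp (-y)) := by
    have h4 : 0 < Real.exp (-(4*y)) := Real.exp_pos _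
    have : (1/2 + y)^2 * Real.exp (-(4*y)) ≤ (1 + y + y^2) * Real.exp (-y) := by
      have hs : (0:ℝ) ≤ (1/2+y)^2 := sq_nonneg _
      nlinarith
    exact mul_le_mul_of_nonneg_left this hyp.le
  refine hchain.trans ?_
  have expand : y ^ (2*δ) * ((1 + y + y^2) * Real.exp (-y))
      = y ^ (2*δ) * Real.exp (-y) + y ^ (2*δ+1) * Real.exp (-y) + y ^ (2*δ+2) * Real.exp (-y) := by
    rw [e1, e2]; ring
  rw [expand]; linarith

lemma Gterm {t lam w : ℝ} (ht : 0 < t) (hl : 0 < lam) (hw : 0 ≤ w) :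
    lam * Real.exp (-4*t*lam) * (1 - Real.exp (-2*t*lam))⁻¹ * w ≤ w * (2*t)⁻¹ := by
  have hx : 0 < 2*t*lam := by positivity
  have e1 : (-2)*t*lam = -(2*t*lam) := by ring
  have e2 : Real.exp ((-4)*t*lam) = Real.exp (-(2*t*lam)) * Real.exp (-(2*t*lam)) := by
    rw [← Real.exp_add]; ring_nf
  have ha1 := aux1 hx
  have h1e := aux_pos hx
  have hexple : Real.exp (-(2*t*lam)) ≤ 1 := Real.exp_le_one_iff.mpr (by linarith)
  have hinv : (0:ℝ) ≤ (1 - Real.exp (-(2*t*lam)))⁻¹ * Real.exp (-(2*t*lam)) := by positivity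
  calc lam * Real.exp (-4*t*lam) * (1 - Real.exp (-2*t*lam))⁻¹ * w
      = w * (lam * (Real.exp (-(2*t*lam)) * ((1 - Real.exp (-(2*t*lam)))⁻¹ * Real.exp (-(2*t*lam))))) := by
        rw [show (-4)*t*lam = (-4)*t*lam from rfl] at e2 ⊢
        rw [show -4*t*lam = (-4)*t*lam by ring, e2, show -2*t*lam = -(2*t*lam) by ring]
        ring
    _ ≤ w * (lam * (1 * (2*t*lam)⁻¹)) := by
        have inner : Real.exp (-(2*t*lam)) * ((1 - Real.exp (-(2*t*lam)))⁻¹ * Real.exp (-(2*t*lam)))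
            ≤ 1 * (2*t*lam)⁻¹ := mul_le_mul hexple ha1 hinv zero_le_one
        exact mul_le_mul_of_nonneg_left (mul_le_mul_of_nonneg_left inner hl.le) hw
    _ = w * (2*t)⁻¹ := by
        field_simp

lemma Fterm (δ : ℝ) (hδ : 0 < δ) {t lam : ℝ} (ht : 0 < t) (hl : 0 < lam) :
    lam^2 * Real.exp (-4*t*lam) * (1 - Real.exp (-2*t*lam)) ^ (-(2:ℝ))
      ≤ (3 * (Nat.factorial (Nat.ceil (2*δ+2)) : ℝ)) * lam ^ (-(2*δ)) * t ^ (-(2*δ+2)) := by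
  have hx : 0 < 2*t*lam := by positivity
  have h1e := aux_pos hx
  set K : ℝ := 3 * (Nat.factorial (Nat.ceil (2*δ+2)) : ℝ) with hK
  have hKpos : 0 < K := by positivity
  have hy : 0 < t*lam := by positivity
  -- step 1: rewrite LHS
  have hrw : lam^2 * Real.exp (-4*t*lam) * (1 - Real.exp (-2*t*lam)) ^ (-(2:ℝ))
      = (lam * ((1 - Real.exp (-(2*t*lam)))⁻¹ * Real.exp (-(2*t*lam))))^2 := by
    rw [show -2*t*lam = -(2*t*lam) by ring,
        show -4*t*lam = -(2*t*lam) + -(2*t*lam) by ring, Real.exp_add,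
        Real.rpow_neg h1e.le, Real.rpow_two, ← inv_pow]
    ring
  rw [hrw]
  -- step 2: aux2 bound
  have hb : lam * ((1 - Real.exp (-(2*t*lam)))⁻¹ * Real.exp (-(2*t*lam)))
      ≤ lam * (((2*t*lam)⁻¹ + 1) * Real.exp (-(2*t*lam))) := by
    gcongr
    exact aux2 hx
  have hb0 : 0 ≤ lam * ((1 - Real.exp (-(2*t*lam)))⁻¹ * Real.exp (-(2*t*lam))) := by positivity
  have hsq : (lam * ((1 - Real.exp (-(2*t*lam)))⁻¹ * Real.exp (-(2*t*lam))))^2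
      ≤ (lam * (((2*t*lam)⁻¹ + 1) * Real.exp (-(2*t*lam))))^2 :=
    pow_le_pow_left₀ hb0 hb 2
  refine hsq.trans ?_
  -- step 3: change of variables y = t*lam
  have hA : lam * (((2*t*lam)⁻¹ + 1) * Real.exp (-(2*t*lam)))
      = t⁻¹ * ((1/2 + t*lam) * Real.exp (-(2*t*lam))) := by
    field_simp
  rw [hA]
  have hexp2 : Real.exp (-(2*t*lam)) * Real.exp (-(2*t*lam)) = Real.exp (-(4*(t*lam))) := by
    rw [← Real.exp_add]; ring_nf
  have hLHS : (t⁻¹ * ((1/2 + t*lam) * Real.exp (-(2*t*lam))))^2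
      = (t⁻¹)^2 * ((1/2 + t*lam)^2 * Real.exp (-(4*(t*lam)))) := by
    rw [← hexp2]; ring
  rw [hLHS]
  -- step 4: rewrite RHS
  have ht2 : t ^ (-(2*δ+2)) = t ^ (-(2*δ)) * (t⁻¹)^2 := by
    rw [show -(2*δ+2) = (-(2*δ)) + (-2:ℝ) by ring, Real.rpow_add ht]
    congr 1
    rw [show ((-2:ℝ)) = ((-2 : ℤ) : ℝ) by norm_num, Real.rpow_intCast]
    rw [zpow_neg, inv_pow]
    norm_cast
  have hRHS : K * lam ^ (-(2*δ)) * t ^ (-(2*δ+2)) = (t⁻¹)^2 * (K * (t*lam) ^ (-(2*δ))) := by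
    rw [ht2, Real.mul_rpow ht.le hl.le]
    ring
  rw [hRHS]
  -- step 5: key_sup
  have hkey := key_sup δ hδ hy
  have hyp : (0:ℝ) < (t*lam) ^ (2*δ) := Real.rpow_pos_of_pos hy _
  have hfinal : (1/2 + t*lam)^2 * Real.exp (-(4*(t*lam))) ≤ K * (t*lam) ^ (-(2*δ)) := by
    rw [Real.rpow_neg hy.le, ← div_eq_mul_inv, le_div_iff₀ hyp]
    calc (1/2 + t*lam)^2 * Real.exp (-(4*(t*lam))) * (t*lam) ^ (2*δ)
        = (t*lam) ^ (2*δ) * ((1/2 + t*lam)^2 * Real.exp (-(4*(t*lam)))) := by ring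
      _ ≤ K := hkey
  exact mul_le_mul_of_nonneg_left hfinal (by positivity)

end HSAux

/-- Let `(λ_k)` be strictly positive with `Σ λ_k^(−2δ) < ∞` for some `δ > 0`, and
`(w_k)` nonnegative with `Σ w_k < ∞`.  With
`F(t) = Σ_{k≥1} λ_k² e^(−4tλ_k)(1−e^(−2tλ_k))^(−2)` and
`G_w(t) = Σ_{k≥1} λ_k e^(−4tλ_k)(1−e^(−2tλ_k))^(−1) w_k`, for every
`ϑ ∈ (2δ/(2δ+1), 1)` and every `λ > 0`,
`∫_0^∞ e^(−λt) F(t)^((1−ϑ)/2) G_w(t)^(ϑ/2) dt < ∞`. -/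
theorem hilbertSchmidt_covariance_interpolation_integrable
    (l : ℕ → ℝ) (hl : ∀ k : ℕ, 1 ≤ k → 0 < l k)
    (δ : ℝ) (hδ : 0 < δ)
    (hlsum : Summable fun k : ℕ => l (k + 1) ^ (-(2 * δ)))
    (w : ℕ → ℝ) (hw : ∀ k : ℕ, 1 ≤ k → 0 ≤ w k)
    (hwsum : Summable fun k : ℕ => w (k + 1))
    (F Gw : ℝ → ℝ≥0∞)
    (hF : ∀ t, F t = ∑' k : ℕ, ENNReal.ofReal
      (l (k + 1) ^ 2 * Real.exp (-4 * t * l (k + 1))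
        * (1 - Real.exp (-2 * t * l (k + 1))) ^ (-(2 : ℝ))))
    (hG : ∀ t, Gw t = ∑' k : ℕ, ENNReal.ofReal
      (l (k + 1) * Real.exp (-4 * t * l (k + 1))
        * (1 - Real.exp (-2 * t * l (k + 1)))⁻¹ * w (k + 1)))
    (ϑ : ℝ) (hϑ1 : 2 * δ / (2 * δ + 1) < ϑ) (hϑ2 : ϑ < 1)
    (lam : ℝ) (hlam : 0 < lam) :
    ∫⁻ t in Set.Ioi (0 : ℝ),
        ENNReal.ofReal (Real.exp (-lam * t)) * F t ^ ((1 - ϑ) / 2) * Gw t ^ (ϑ / 2)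
      < ⊤ := by
  set K : ℝ := 3 * (Nat.factorial (Nat.ceil (2*δ+2)) : ℝ) with hKdef
  set Λ : ℝ := ∑' k : ℕ, l (k+1) ^ (-(2*δ)) with hΛdef
  set W : ℝ := ∑' k : ℕ, w (k+1) with hWdef
  have hk1 : ∀ k : ℕ, 1 ≤ k + 1 := fun k => Nat.le_add_left 1 k
  have hΛ0 : 0 ≤ Λ := tsum_nonneg fun k => Real.rpow_nonneg (hl (k+1) (hk1 k)).le _
  have hW0 : 0 ≤ W := tsum_nonneg fun k => hw (k+1) (hk1 k)
  have hK0 : (0:ℝ) < K := by positivity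
  set CF : ℝ := K * Λ with hCFdef
  have hCF0 : 0 ≤ CF := by positivity
  have hp : (0:ℝ) ≤ (1-ϑ)/2 := by linarith
  have hϑ0 : 0 < ϑ := lt_of_le_of_lt (div_nonneg (by linarith) (by linarith)) hϑ1
  have hq : (0:ℝ) ≤ ϑ/2 := by linarith
  -- bound on F
  have hFb : ∀ t : ℝ, 0 < t → F t ≤ ENNReal.ofReal (CF * t ^ (-(2*δ+2))) := by
    intro t ht
    rw [hF t]
    have hsum2 : Summable (fun k : ℕ => (K * t ^ (-(2*δ+2))) * l (k+1) ^ (-(2*δ))) :=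
      hlsum.mul_left _
    calc ∑' k : ℕ, ENNReal.ofReal
          (l (k + 1) ^ 2 * Real.exp (-4 * t * l (k + 1))
            * (1 - Real.exp (-2 * t * l (k + 1))) ^ (-(2 : ℝ)))
        ≤ ∑' k : ℕ, ENNReal.ofReal ((K * t ^ (-(2*δ+2))) * l (k+1) ^ (-(2*δ))) := by
          refine ENNReal.tsum_le_tsum fun k => ENNReal.ofReal_le_ofReal ?_
          exact (Fterm δ hδ ht (hl (k+1) (hk1 k))).trans (le_of_eq (by ring))
      _ = ENNReal.ofReal (∑' k : ℕ, (K * t ^ (-(2*δ+2))) * l (k+1) ^ (-(2*δ))) := by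
          refine (ENNReal.ofReal_tsum_of_nonneg (fun k => ?_) hsum2).symm
          exact mul_nonneg (mul_nonneg hK0.le (Real.rpow_nonneg ht.le _))
            (Real.rpow_nonneg (hl (k+1) (hk1 k)).le _)
      _ = ENNReal.ofReal (CF * t ^ (-(2*δ+2))) := by
          rw [tsum_mul_left]
          congr 1
          rw [hCFdef]
          ring
  -- bound on Gw
  have hGb : ∀ t : ℝ, 0 < t → Gw t ≤ ENNReal.ofReal ((W/2) * t⁻¹) := by
    intro t ht
    rw [hG t]
    have hsum2 : Summable (fun k : ℕ => (2*t)⁻¹ * w (k+1)) := hwsum.mul_left _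
    calc ∑' k : ℕ, ENNReal.ofReal
          (l (k + 1) * Real.exp (-4 * t * l (k + 1))
            * (1 - Real.exp (-2 * t * l (k + 1)))⁻¹ * w (k + 1))
        ≤ ∑' k : ℕ, ENNReal.ofReal ((2*t)⁻¹ * w (k+1)) := by
          refine ENNReal.tsum_le_tsum fun k => ENNReal.ofReal_le_ofReal ?_
          exact (Gterm ht (hl (k+1) (hk1 k)) (hw (k+1) (hk1 k))).trans (le_of_eq (mul_comm _ _))
      _ = ENNReal.ofReal (∑' k : ℕ, (2*t)⁻¹ * w (k+1)) := by
          refine (ENNReal.ofReal_tsum_of_nonneg (fun k => ?_) hsum2).symm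
          exact mul_nonneg (by positivity) (hw (k+1) (hk1 k))
      _ = ENNReal.ofReal ((W/2) * t⁻¹) := by
          rw [tsum_mul_left]
          congr 1
          rw [mul_inv]
          ring
  -- constants for the scalar bound
  set Ci : ℝ := CF ^ ((1-ϑ)/2) * (W/2) ^ (ϑ/2) with hCidef
  have hCi0 : 0 ≤ Ci := mul_nonneg (Real.rpow_nonneg hCF0 _) (Real.rpow_nonneg (by linarith) _)
  set r : ℝ := (2*δ+2) * ((1-ϑ)/2) + ϑ/2 with hrdef
  have hr1 : r < 1 := by
    have h2δ : (0:ℝ) < 2*δ+1 := by linarith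
    rw [div_lt_iff₀ h2δ] at hϑ1
    rw [hrdef]
    nlinarith
  have hr0 : 0 < r := by
    rw [hrdef]
    nlinarith
  -- the scalar identity
  have hreal : ∀ t : ℝ, 0 < t →
      Real.exp (-lam*t) * (CF * t ^ (-(2*δ+2))) ^ ((1-ϑ)/2) * ((W/2) * t⁻¹) ^ (ϑ/2)
        = Ci * (Real.exp (-lam*t) * t ^ (-r)) := by
    intro t ht
    have e1 : (CF * t ^ (-(2*δ+2))) ^ ((1-ϑ)/2)
        = CF ^ ((1-ϑ)/2) * t ^ (-(2*δ+2) * ((1-ϑ)/2)) := by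
      rw [Real.mul_rpow hCF0 (Real.rpow_nonneg ht.le _), ← Real.rpow_mul ht.le]
    have e2 : ((W/2) * t⁻¹) ^ (ϑ/2) = (W/2) ^ (ϑ/2) * t ^ (-(ϑ/2)) := by
      rw [Real.mul_rpow (by linarith : (0:ℝ) ≤ W/2) (inv_nonneg.mpr ht.le),
        ← Real.rpow_neg_one t, ← Real.rpow_mul ht.le]
      norm_num
    rw [e1, e2]
    have e3 : t ^ (-(2*δ+2) * ((1-ϑ)/2)) * t ^ (-(ϑ/2)) = t ^ (-r) := by
      rw [← Real.rpow_add ht]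
      congr 1
      rw [hrdef]; ring
    calc Real.exp (-lam*t) * (CF ^ ((1-ϑ)/2) * t ^ (-(2*δ+2) * ((1-ϑ)/2)))
          * ((W/2) ^ (ϑ/2) * t ^ (-(ϑ/2)))
        = Ci * (Real.exp (-lam*t) * (t ^ (-(2*δ+2) * ((1-ϑ)/2)) * t ^ (-(ϑ/2)))) := by
          rw [hCidef]; ring
      _ = Ci * (Real.exp (-lam*t) * t ^ (-r)) := by rw [e3]
  -- master pointwise bound
  have master : ∀ t : ℝ, t ∈ Set.Ioi (0:ℝ) →
      ENNReal.ofReal (Real.exp (-lam * t)) * F t ^ ((1 - ϑ) / 2) * Gw t ^ (ϑ / 2)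
        ≤ ENNReal.ofReal (Ci * (Real.exp (-lam*t) * t ^ (-r))) := by
    intro t ht
    rw [Set.mem_Ioi] at ht
    have h1 : F t ^ ((1-ϑ)/2) ≤ ENNReal.ofReal ((CF * t ^ (-(2*δ+2))) ^ ((1-ϑ)/2)) := by
      rw [← ENNReal.ofReal_rpow_of_nonneg (mul_nonneg hCF0 (Real.rpow_nonneg ht.le _)) hp]
      exact ENNReal.rpow_le_rpow (hFb t ht) hp
    have h2 : Gw t ^ (ϑ/2) ≤ ENNReal.ofReal (((W/2) * t⁻¹) ^ (ϑ/2)) := by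
      rw [← ENNReal.ofReal_rpow_of_nonneg
        (mul_nonneg (by linarith : (0:ℝ) ≤ W/2) (inv_nonneg.mpr ht.le)) hq]
      exact ENNReal.rpow_le_rpow (hGb t ht) hq
    calc ENNReal.ofReal (Real.exp (-lam * t)) * F t ^ ((1 - ϑ) / 2) * Gw t ^ (ϑ / 2)
        ≤ ENNReal.ofReal (Real.exp (-lam * t))
            * ENNReal.ofReal ((CF * t ^ (-(2*δ+2))) ^ ((1-ϑ)/2))
            * ENNReal.ofReal (((W/2) * t⁻¹) ^ (ϑ/2)) :=
          mul_le_mul' (mul_le_mul' le_rfl h1) h2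
      _ = ENNReal.ofReal (Real.exp (-lam * t) * (CF * t ^ (-(2*δ+2))) ^ ((1-ϑ)/2)
            * ((W/2) * t⁻¹) ^ (ϑ/2)) := by
          rw [← ENNReal.ofReal_mul (Real.exp_pos _).le, ← ENNReal.ofReal_mul
            (mul_nonneg (Real.exp_pos _).le (Real.rpow_nonneg
              (mul_nonneg hCF0 (Real.rpow_nonneg ht.le _)) _))]
      _ = ENNReal.ofReal (Ci * (Real.exp (-lam*t) * t ^ (-r))) := by rw [hreal t ht]
  -- split the integral
  refine lt_of_le_of_lt (setLIntegral_mono' measurableSet_Ioi master) ?_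
  rw [← Set.Ioc_union_Ioi_eq_Ioi (zero_le_one : (0:ℝ) ≤ 1),
    lintegral_union measurableSet_Ioi (Set.Ioc_disjoint_Ioi le_rfl)]
  refine ENNReal.add_lt_top.mpr ⟨?_, ?_⟩
  · -- near zero
    have hbd : ∀ t ∈ Set.Ioc (0:ℝ) 1,
        ENNReal.ofReal (Ci * (Real.exp (-lam*t) * t ^ (-r)))
          ≤ ENNReal.ofReal (Ci * t ^ (-r)) := by
      intro t ht
      refine ENNReal.ofReal_le_ofReal ?_
      have he : Real.exp (-lam*t) ≤ 1 := Real.exp_le_one_iff.mpr (by nlinarith [ht.1])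
      have htr : (0:ℝ) ≤ t ^ (-r) := Real.rpow_nonneg ht.1.le _
      exact mul_le_mul_of_nonneg_left (mul_le_of_le_one_left htr he) hCi0
    refine lt_of_le_of_lt (setLIntegral_mono' measurableSet_Ioc hbd) ?_
    have hint : IntegrableOn (fun t : ℝ => Ci * t ^ (-r)) (Set.Ioc (0:ℝ) 1) := by
      refine Integrable.const_mul ?_ Ci
      exact (intervalIntegrable_iff_integrableOn_Ioc_of_le zero_le_one).mp
        (intervalIntegral.intervalIntegrable_rpow' (by linarith))
    exact hint.lintegral_lt_top
  · -- near infinity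
    have hbd : ∀ t ∈ Set.Ioi (1:ℝ),
        ENNReal.ofReal (Ci * (Real.exp (-lam*t) * t ^ (-r)))
          ≤ ENNReal.ofReal (Ci * Real.exp (-lam*t)) := by
      intro t ht
      rw [Set.mem_Ioi] at ht
      refine ENNReal.ofReal_le_ofReal ?_
      have htr : t ^ (-r) ≤ 1 := Real.rpow_le_one_of_one_le_of_nonpos ht.le (by linarith)
      exact mul_le_mul_of_nonneg_left (mul_le_of_le_one_right (Real.exp_pos _).le htr) hCi0
    refine lt_of_le_of_lt (setLIntegral_mono' measurableSet_Ioi hbd) ?_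
    have hint : IntegrableOn (fun t : ℝ => Ci * Real.exp (-lam*t)) (Set.Ioi (1:ℝ)) :=
      Integrable.const_mul (exp_neg_integrableOn_Ioi 1 hlam) Ci
    exact hint.lintegral_lt_top
end
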